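/- arXiv:math/0603013 — 2 statements merged into one kernel-verified Lean document; each statement's English description precedes it below -/
import Mathlib

section
/- Let c : ℕ → ℝ be nonnegative with ∑_{n ≤ x} c_n = C·x + O(x^{3/5}) for some constant C > 0. Suppose Z is holomorphic on {s : Re s > 3/5, s ≠ 1} and Z(s) = ∑_{n=1}^∞ c_n n^{-s} for Re s > 1. Then Z(1+it) = O(log t) for t ≥ 2. -/
open Filter MeasureTheory Finset Topology

noncomputable section

namespace RankinSelbergAux

variable (c' : ℕ → ℝ)

/-- The summatory function of `c'`. -/
def A (x : ℝ) : ℝ := ∑ k ∈ Finset.Icc 0 ⌊x⌋₊, c' k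

/-- The error term. -/
def Dl (C : ℝ) (t : ℝ) : ℝ := A c' t - C * t

/-- The analytic continuation integral. -/
def G (C : ℝ) (s : ℂ) : ℂ := ∫ t in Set.Ioi (1:ℝ), (t : ℂ) ^ (-s - 1) * ((Dl c' C t : ℝ) : ℂ)

lemma measurable_A : Measurable (A c') :=
  (measurable_from_top (f := fun n : ℕ => ∑ k ∈ Finset.Icc 0 n, c' k)).comp Nat.measurable_floor

/-- derivative of `t ↦ (t:ℂ)^(-s)` -/
lemma hasDerivAt_cpow_neg (s : ℂ) {t : ℝ} (ht : 0 < t) :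
    HasDerivAt (fun u : ℝ => (u : ℂ) ^ (-s)) (-s * (t : ℂ) ^ (-s - 1)) t := by
  have h1 : HasStrictDerivAt (fun z : ℂ => z ^ (-s)) (-s * (t : ℂ) ^ (-s - 1)) (t : ℂ) :=
    Complex.hasStrictDerivAt_cpow_const (by exact Complex.ofReal_mem_slitPlane.mpr ht)
  exact h1.hasDerivAt.comp_ofReal

/-- Abel summation for `f t = (t:ℂ)^(-s)`. -/
lemma abel_cpow (hz : c' 0 = 0) (s : ℂ) (b : ℝ) :
    ∑ k ∈ Finset.Icc 0 ⌊b⌋₊, (k : ℂ) ^ (-s) * (c' k : ℂ)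
      = (b : ℂ) ^ (-s) * (A c' b : ℂ)
        + s * ∫ t in Set.Ioc 1 b, (t : ℂ) ^ (-s - 1) * (A c' t : ℂ) := by
  have hderiv : ∀ t : ℝ, 0 < t →
      deriv (fun u : ℝ => (u : ℂ) ^ (-s)) t = -s * (t : ℂ) ^ (-s - 1) :=
    fun t ht => (hasDerivAt_cpow_neg s ht).deriv
  have hcont : ContinuousOn (fun t : ℝ => -s * (t : ℂ) ^ (-s - 1)) (Set.Icc 1 b) := by
    refine continuousOn_const.mul ?_
    intro t ht
    exact (Complex.continuousAt_ofReal_cpow_const t _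
      (Or.inr (by linarith [ht.1] : t ≠ 0))).continuousWithinAt
  have hint : IntegrableOn (deriv fun u : ℝ => (u : ℂ) ^ (-s)) (Set.Icc 1 b) := by
    refine (hcont.integrableOn_Icc).congr_fun ?_ measurableSet_Icc
    intro t ht
    exact (hderiv t (by linarith [ht.1])).symm
  have hdiff : ∀ t ∈ Set.Icc (1:ℝ) b, DifferentiableAt ℝ (fun u : ℝ => (u : ℂ) ^ (-s)) t :=
    fun t ht => (hasDerivAt_cpow_neg s (by linarith [ht.1])).differentiableAt
  have key := sum_mul_eq_sub_integral_mul₀ (c := fun n => (c' n : ℂ))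
    (f := fun u : ℝ => (u : ℂ) ^ (-s)) (by simp [hz]) b hdiff hint
  have hsum : ∀ t : ℝ, (∑ k ∈ Finset.Icc 0 ⌊t⌋₊, (c' k : ℂ)) = ((A c' t : ℝ) : ℂ) := by
    intro t; rw [A]; push_cast; ring
  simp only [hsum] at key
  have hIcongr : ∫ t in Set.Ioc 1 b, deriv (fun u : ℝ => (u : ℂ) ^ (-s)) t * ((A c' t : ℝ) : ℂ)
      = ∫ t in Set.Ioc 1 b, (-s) * ((t : ℂ) ^ (-s - 1) * ((A c' t : ℝ) : ℂ)) := by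
    refine setIntegral_congr_fun measurableSet_Ioc ?_
    intro t ht
    dsimp only
    rw [hderiv t (by linarith [ht.1])]
    ring
  rw [show (∑ k ∈ Finset.Icc 0 ⌊b⌋₊, (k : ℂ) ^ (-s) * (c' k : ℂ))
      = ∑ k ∈ Finset.Icc 0 ⌊b⌋₊, ((k : ℝ) : ℂ) ^ (-s) * (c' k : ℂ) by push_cast; rfl,
    key, hIcongr, integral_const_mul]
  ring

/-- Abel summation for `f t = t ^ (-σ)` (real). -/
lemma abel_rpow (hz : c' 0 = 0) (σ : ℝ) (b : ℝ) :
    ∑ k ∈ Finset.Icc 0 ⌊b⌋₊, (k : ℝ) ^ (-σ) * c' k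
      = b ^ (-σ) * A c' b + σ * ∫ t in Set.Ioc 1 b, t ^ (-σ - 1) * A c' t := by
  have hderiv : ∀ t : ℝ, 0 < t →
      deriv (fun u : ℝ => u ^ (-σ)) t = -σ * t ^ (-σ - 1) := by
    intro t ht
    exact (Real.hasDerivAt_rpow_const (Or.inl ht.ne')).deriv
  have hcont : ContinuousOn (fun t : ℝ => -σ * t ^ (-σ - 1)) (Set.Icc 1 b) := by
    refine continuousOn_const.mul ?_
    intro t ht
    exact (Real.continuousAt_rpow_const t _ (Or.inl (show (0:ℝ) < t by linarith [ht.1]).ne')).continuousWithinAt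
  have hint : IntegrableOn (deriv fun u : ℝ => u ^ (-σ)) (Set.Icc 1 b) := by
    refine (hcont.integrableOn_Icc).congr_fun ?_ measurableSet_Icc
    intro t ht
    exact (hderiv t (by linarith [ht.1])).symm
  have hdiff : ∀ t ∈ Set.Icc (1:ℝ) b, DifferentiableAt ℝ (fun u : ℝ => u ^ (-σ)) t := fun t ht =>
    (Real.hasDerivAt_rpow_const (p := -σ) (Or.inl (by linarith [ht.1] : t ≠ 0))).differentiableAt
  have key := sum_mul_eq_sub_integral_mul₀ (c := c')
    (f := fun u : ℝ => u ^ (-σ)) hz b hdiff hint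
  have hsum : ∀ t : ℝ, (∑ k ∈ Finset.Icc 0 ⌊t⌋₊, c' k) = A c' t := fun t => rfl
  simp only [hsum] at key
  have hIcongr : ∫ t in Set.Ioc 1 b, deriv (fun u : ℝ => u ^ (-σ)) t * A c' t
      = ∫ t in Set.Ioc 1 b, (-σ) * (t ^ (-σ - 1) * A c' t) := by
    refine setIntegral_congr_fun measurableSet_Ioc ?_
    intro t ht
    dsimp only
    rw [hderiv t (by linarith [ht.1])]
    ring
  rw [key, hIcongr, integral_const_mul]
  ring

lemma helper_int {g : ℝ → ℝ} (hg : Measurable g) (s : ℂ) {a M e : ℝ} (ha : 0 < a)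
    (hbound : ∀ t, a ≤ t → |g t| ≤ M * t ^ e) (hexp : e < s.re) :
    IntegrableOn (fun t : ℝ => (t : ℂ) ^ (-s - 1) * (g t : ℂ)) (Set.Ioi a) := by
  have haesm : AEStronglyMeasurable (fun t : ℝ => (t : ℂ) ^ (-s - 1) * (g t : ℂ))
      (volume.restrict (Set.Ioi a)) := by
    refine AEStronglyMeasurable.mul ?_ ((Complex.measurable_ofReal.comp hg).aestronglyMeasurable)
    refine ContinuousOn.aestronglyMeasurable (fun t ht => ?_) measurableSet_Ioi
    exact (Complex.continuousAt_ofReal_cpow_const t _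
      (Or.inr (ha.trans ht).ne')).continuousWithinAt
  refine Integrable.mono' (g := fun t => M * t ^ (e - s.re - 1))
    (((integrableOn_Ioi_rpow_of_lt (show e - s.re - 1 < -1 by linarith) ha).const_mul M)) haesm ?_
  filter_upwards [ae_restrict_mem measurableSet_Ioi] with t ht
  have ht0 : 0 < t := ha.trans ht
  rw [norm_mul, Complex.norm_cpow_eq_rpow_re_of_pos ht0,
    Complex.norm_real, Real.norm_eq_abs]
  have h1 : t ^ ((-s - 1).re) * |g t| ≤ t ^ ((-s - 1).re) * (M * t ^ e) :=
    mul_le_mul_of_nonneg_left (hbound t ht.le) (Real.rpow_nonneg ht0.le _)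
  refine h1.trans (le_of_eq ?_)
  rw [show (-s - 1).re = -s.re - 1 by simp, show e - s.re - 1 = e + (-s.re - 1) by ring,
    Real.rpow_add ht0]
  ring

lemma helper_norm {g : ℝ → ℝ} (hg : Measurable g) (s : ℂ) {a M e : ℝ} (ha : 0 < a)
    (hM : 0 ≤ M) (hbound : ∀ t, a ≤ t → |g t| ≤ M * t ^ e) (hexp : e < s.re) :
    ‖∫ t in Set.Ioi a, (t : ℂ) ^ (-s - 1) * (g t : ℂ)‖ ≤ M * a ^ (e - s.re) / (s.re - e) := by
  refine (norm_integral_le_integral_norm _).trans ?_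
  have h1 : ∫ t in Set.Ioi a, ‖(t : ℂ) ^ (-s - 1) * (g t : ℂ)‖
      ≤ ∫ t in Set.Ioi a, M * t ^ (e - s.re - 1) := by
    refine integral_mono_ae ((helper_int hg s ha hbound hexp).norm)
      ((integrableOn_Ioi_rpow_of_lt (show e - s.re - 1 < -1 by linarith) ha).const_mul M) ?_
    filter_upwards [ae_restrict_mem measurableSet_Ioi] with t ht
    have ht0 : 0 < t := ha.trans ht
    rw [norm_mul, Complex.norm_cpow_eq_rpow_re_of_pos ht0,
      Complex.norm_real, Real.norm_eq_abs]
    calc t ^ ((-s - 1).re) * |g t| ≤ t ^ ((-s - 1).re) * (M * t ^ e) :=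
          mul_le_mul_of_nonneg_left (hbound t ht.le) (Real.rpow_nonneg ht0.le _)
      _ = M * t ^ (e - s.re - 1) := by
          rw [show (-s - 1).re = -s.re - 1 by simp, show e - s.re - 1 = e + (-s.re - 1) by ring,
            Real.rpow_add ht0]
          ring
  refine h1.trans (le_of_eq ?_)
  rw [integral_const_mul, integral_Ioi_rpow_of_lt (show e - s.re - 1 < -1 by linarith) ha]
  rw [show e - s.re - 1 + 1 = e - s.re by ring]
  rw [neg_div, show (e - s.re) = -(s.re - e) by ring, div_neg, neg_neg]; ring

section

variable {c'} (hz : c' 0 = 0) (h0 : ∀ n, 0 ≤ c' n) {C K : ℝ} (hC : 0 < C) (hK : 0 ≤ K)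
  (hAub : ∀ x : ℝ, 1 ≤ x → A c' x ≤ (C + K) * x)
  (hD : ∀ x : ℝ, 1 ≤ x → |Dl c' C x| ≤ K * x ^ ((3:ℝ)/5))

include h0 in
lemma A_nonneg (x : ℝ) : 0 ≤ A c' x := Finset.sum_nonneg fun k _ => h0 k

lemma measurable_Dl : Measurable (Dl c' C) :=
  (measurable_A c').sub (measurable_const.mul measurable_id)

include hz h0 hC hK hAub in
lemma sum_rpow_le {σ : ℝ} (hσ : 1 < σ) (n : ℕ) :
    ∑ k ∈ Finset.Icc 0 n, (k : ℝ) ^ (-σ) * c' k ≤ (C + K) * (1 + σ / (σ - 1)) := by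
  have hCK : 0 ≤ C + K := by linarith
  have hrhs : 0 ≤ (C + K) * (1 + σ / (σ - 1)) := by
    have : 0 ≤ σ / (σ - 1) := div_nonneg (by linarith) (by linarith)
    have : 0 ≤ 1 + σ / (σ - 1) := by linarith
    positivity
  rcases Nat.eq_zero_or_pos n with rfl | hn
  · simpa [hz] using hrhs
  have hb : (1:ℝ) ≤ (n : ℝ) := by exact_mod_cast hn
  have key := abel_rpow c' hz σ (n : ℝ)
  rw [Nat.floor_natCast] at key
  rw [key]
  -- boundary term
  have h1 : (n:ℝ) ^ (-σ) * A c' (n:ℝ) ≤ C + K := by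
    calc (n:ℝ) ^ (-σ) * A c' (n:ℝ) ≤ (n:ℝ) ^ (-σ) * ((C + K) * n) :=
          mul_le_mul_of_nonneg_left (hAub _ hb) (Real.rpow_nonneg (by linarith) _)
      _ = (C + K) * ((n:ℝ) ^ (-σ) * (n:ℝ) ^ (1:ℝ)) := by rw [Real.rpow_one]; ring
      _ = (C + K) * (n:ℝ) ^ (1 - σ) := by rw [← Real.rpow_add (by linarith), neg_add_eq_sub]
      _ ≤ (C + K) * 1 := by
          refine mul_le_mul_of_nonneg_left ?_ hCK
          exact Real.rpow_le_one_of_one_le_of_nonpos hb (by linarith)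
      _ = C + K := mul_one _
  -- integral term
  have hInt2 : IntegrableOn (fun t : ℝ => (C + K) * t ^ (-σ)) (Set.Ioi (1:ℝ)) :=
    (integrableOn_Ioi_rpow_of_lt (by linarith) one_pos).const_mul _
  have hmeas : Measurable (fun t : ℝ => t ^ (-σ - 1) * A c' t) := by
    refine Measurable.mul ?_ ?_
    · exact measurable_id.pow_const (-σ - 1)
    · exact (measurable_from_top (f := fun n : ℕ => ∑ k ∈ Finset.Icc 0 n, c' k)).comp
        Nat.measurable_floor
  have hbd : ∀ t : ℝ, t ∈ Set.Ioc (1:ℝ) (n:ℝ) →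
      t ^ (-σ - 1) * A c' t ≤ (C + K) * t ^ (-σ) := by
    intro t ht
    have ht1 : (1:ℝ) ≤ t := ht.1.le
    have ht0 : (0:ℝ) < t := by linarith
    calc t ^ (-σ - 1) * A c' t ≤ t ^ (-σ - 1) * ((C + K) * t) :=
          mul_le_mul_of_nonneg_left (hAub t ht1) (Real.rpow_nonneg ht0.le _)
      _ = (C + K) * (t ^ (-σ - 1) * t ^ (1:ℝ)) := by rw [Real.rpow_one]; ring
      _ = (C + K) * t ^ (-σ) := by rw [← Real.rpow_add ht0]; ring_nf
  have hIntL : IntegrableOn (fun t : ℝ => t ^ (-σ - 1) * A c' t) (Set.Ioc (1:ℝ) (n:ℝ)) := by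
    refine Integrable.mono' (g := fun _ => C + K) ((integrableOn_const_iff).mpr ?_)
      hmeas.aestronglyMeasurable ?_
    · exact Or.inr measure_Ioc_lt_top
    · filter_upwards [ae_restrict_mem measurableSet_Ioc] with t ht
      have ht1 : (1:ℝ) ≤ t := ht.1.le
      have ht0 : (0:ℝ) < t := by linarith
      rw [Real.norm_eq_abs, abs_of_nonneg (mul_nonneg (Real.rpow_nonneg ht0.le _)
        (A_nonneg h0 t))]
      refine (hbd t ht).trans ?_
      calc (C + K) * t ^ (-σ) ≤ (C + K) * 1 := mul_le_mul_of_nonneg_left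
            (Real.rpow_le_one_of_one_le_of_nonpos ht1 (by linarith)) hCK
        _ = C + K := mul_one _
  have h2 : ∫ t in Set.Ioc (1:ℝ) (n:ℝ), t ^ (-σ - 1) * A c' t
      ≤ ∫ t in Set.Ioi (1:ℝ), (C + K) * t ^ (-σ) := by
    refine le_trans (integral_mono_ae hIntL (hInt2.mono_set Set.Ioc_subset_Ioi_self) ?_) ?_
    · filter_upwards [ae_restrict_mem measurableSet_Ioc] with t ht using hbd t ht
    · refine setIntegral_mono_set hInt2 ?_ (HasSubset.Subset.eventuallyLE Set.Ioc_subset_Ioi_self)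
      filter_upwards [ae_restrict_mem measurableSet_Ioi] with t ht
      have ht0 : (0:ℝ) < t := lt_trans one_pos ht
      positivity
  have h3 : ∫ t in Set.Ioi (1:ℝ), (C + K) * t ^ (-σ) = (C + K) * (1 / (σ - 1)) := by
    rw [integral_const_mul, integral_Ioi_rpow_of_lt (by linarith) one_pos, Real.one_rpow]
    rw [show -σ + 1 = -(σ - 1) by ring, div_neg, neg_div, neg_neg]
  have hσ0 : (0:ℝ) ≤ σ := by linarith
  have := mul_le_mul_of_nonneg_left (h2.trans_eq h3) hσ0
  calc (n:ℝ) ^ (-σ) * A c' (n:ℝ) + σ * ∫ t in Set.Ioc (1:ℝ) (n:ℝ), t ^ (-σ - 1) * A c' t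
      ≤ (C + K) + σ * ((C + K) * (1 / (σ - 1))) := add_le_add h1 this
    _ = (C + K) * (1 + σ / (σ - 1)) := by field_simp

include hz h0 in
lemma norm_term_eq' (s : ℂ) (k : ℕ) :
    ‖LSeries.term (fun n => (c' n : ℂ)) s k‖ = (k : ℝ) ^ (-s.re) * c' k := by
  rcases Nat.eq_zero_or_pos k with rfl | hk
  · simp [LSeries.term_zero, hz]
  · rw [LSeries.norm_term_eq, if_neg hk.ne', Complex.norm_real, Real.norm_eq_abs,
      abs_of_nonneg (h0 k), Real.rpow_neg (Nat.cast_nonneg k), div_eq_mul_inv, mul_comm]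

include hz h0 hC hK hAub in
lemma summable_norm (s : ℂ) (hs : 1 < s.re) :
    Summable (fun k => ‖LSeries.term (fun n => (c' n : ℂ)) s k‖) := by
  refine summable_of_sum_range_le (c := (C + K) * (1 + s.re / (s.re - 1)))
    (fun k => norm_nonneg _) (fun n => ?_)
  calc ∑ k ∈ Finset.range n, ‖LSeries.term (fun n => (c' n : ℂ)) s k‖
      = ∑ k ∈ Finset.range n, (k : ℝ) ^ (-s.re) * c' k := by
        exact Finset.sum_congr rfl fun k _ => norm_term_eq' hz h0 s k
    _ ≤ ∑ k ∈ Finset.Icc 0 n, (k : ℝ) ^ (-s.re) * c' k := by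
        refine Finset.sum_le_sum_of_subset_of_nonneg ?_ ?_
        · intro k hk
          simp only [Finset.mem_range] at hk
          simp only [Finset.mem_Icc]
          omega
        · intro k _ _
          exact mul_nonneg (Real.rpow_nonneg (Nat.cast_nonneg k) _) (h0 k)
    _ ≤ (C + K) * (1 + s.re / (s.re - 1)) := sum_rpow_le hz h0 hC hK hAub hs n

include hz h0 hC hK hAub in
lemma LSeries_eq_integral (s : ℂ) (hs : 1 < s.re) :
    LSeries (fun n => (c' n : ℂ)) s
      = s * ∫ t in Set.Ioi (1:ℝ), (t : ℂ) ^ (-s - 1) * (A c' t : ℂ) := by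
  have hCK : 0 ≤ C + K := by linarith
  have hAbs : ∀ t : ℝ, 1 ≤ t → |A c' t| ≤ (C + K) * t ^ (1:ℝ) := by
    intro t ht
    rw [abs_of_nonneg (A_nonneg h0 t), Real.rpow_one]
    exact hAub t ht
  have hInt : IntegrableOn (fun t : ℝ => (t : ℂ) ^ (-s - 1) * (A c' t : ℂ)) (Set.Ioi 1) :=
    helper_int (measurable_A c') s one_pos hAbs (by linarith)
  -- partial sums tend to the LSeries
  have hsummable : Summable (LSeries.term (fun n => (c' n : ℂ)) s) :=
    (summable_norm hz h0 hC hK hAub s hs).of_norm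
  have h1 : Tendsto (fun m : ℕ => ∑ k ∈ Finset.range (m + 1),
      LSeries.term (fun n => (c' n : ℂ)) s k) atTop (𝓝 (LSeries (fun n => (c' n : ℂ)) s)) :=
    hsummable.hasSum.tendsto_sum_nat.comp (tendsto_add_atTop_nat 1)
  have hterm : ∀ k : ℕ, LSeries.term (fun n => (c' n : ℂ)) s k = (k : ℂ) ^ (-s) * (c' k : ℂ) := by
    intro k
    rcases Nat.eq_zero_or_pos k with rfl | hk
    · simp [LSeries.term_zero, hz]
    · rw [LSeries.term_of_ne_zero hk.ne', Complex.cpow_neg, div_eq_mul_inv, mul_comm]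
  have hps : ∀ m : ℕ, ∑ k ∈ Finset.range (m + 1), LSeries.term (fun n => (c' n : ℂ)) s k
      = ∑ k ∈ Finset.Icc 0 m, (k : ℂ) ^ (-s) * (c' k : ℂ) := by
    intro m
    rw [← Nat.Ico_zero_eq_range, Finset.Ico_add_one_right_eq_Icc]
    exact Finset.sum_congr rfl fun k _ => hterm k
  -- the right-hand side limit
  have hbdry : Tendsto (fun m : ℕ => ((m : ℝ) : ℂ) ^ (-s) * ((A c' (m : ℝ) : ℝ) : ℂ))
      atTop (𝓝 0) := by
    have hg : Tendsto (fun m : ℕ => (C + K) * (m : ℝ) ^ (1 - s.re)) atTop (𝓝 ((C + K) * 0)) := by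
      refine Tendsto.const_mul _ ?_
      have h' : Tendsto (fun x : ℝ => x ^ (1 - s.re)) atTop (𝓝 0) := by
        rw [show 1 - s.re = -(s.re - 1) by ring]
        exact tendsto_rpow_neg_atTop (show (0:ℝ) < s.re - 1 by linarith)
      exact h'.comp tendsto_natCast_atTop_atTop
    rw [mul_zero] at hg
    refine squeeze_zero_norm' ?_ hg
    filter_upwards [eventually_ge_atTop 1] with m hm
    have hm1 : (1:ℝ) ≤ (m:ℝ) := by exact_mod_cast hm
    have hm0 : (0:ℝ) < (m:ℝ) := by linarith
    rw [norm_mul, Complex.norm_cpow_eq_rpow_re_of_pos hm0,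
      Complex.norm_real, Real.norm_eq_abs, abs_of_nonneg (A_nonneg h0 _)]
    calc (m:ℝ) ^ ((-s).re) * A c' (m:ℝ) ≤ (m:ℝ) ^ ((-s).re) * ((C + K) * (m:ℝ)) :=
          mul_le_mul_of_nonneg_left (hAub _ hm1) (Real.rpow_nonneg hm0.le _)
      _ = (C + K) * ((m:ℝ) ^ ((-s).re) * (m:ℝ) ^ (1:ℝ)) := by rw [Real.rpow_one]; ring
      _ = (C + K) * (m:ℝ) ^ (1 - s.re) := by
          rw [← Real.rpow_add hm0, Complex.neg_re, neg_add_eq_sub]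
  have hU : (⋃ m : ℕ, Set.Ioc (1:ℝ) (m:ℝ)) = Set.Ioi 1 := by
    ext x
    simp only [Set.mem_iUnion, Set.mem_Ioc, Set.mem_Ioi]
    constructor
    · rintro ⟨m, h, _⟩; exact h
    · intro h
      obtain ⟨m, hm⟩ := exists_nat_ge x
      exact ⟨m, h, hm⟩
  have hints : Tendsto (fun m : ℕ => ∫ t in Set.Ioc (1:ℝ) (m:ℝ),
      (t : ℂ) ^ (-s - 1) * ((A c' t : ℝ) : ℂ)) atTop
      (𝓝 (∫ t in Set.Ioi (1:ℝ), (t : ℂ) ^ (-s - 1) * ((A c' t : ℝ) : ℂ))) := by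
    have := tendsto_setIntegral_of_monotone (s := fun m : ℕ => Set.Ioc (1:ℝ) (m:ℝ))
      (f := fun t : ℝ => (t : ℂ) ^ (-s - 1) * ((A c' t : ℝ) : ℂ))
      (fun m => measurableSet_Ioc)
      (fun i j hij => Set.Ioc_subset_Ioc le_rfl (by exact_mod_cast hij))
      (by rw [hU]; exact hInt)
    rwa [hU] at this
  have h2 : Tendsto (fun m : ℕ => ((m : ℝ) : ℂ) ^ (-s) * ((A c' (m:ℝ) : ℝ) : ℂ)
      + s * ∫ t in Set.Ioc (1:ℝ) (m:ℝ), (t : ℂ) ^ (-s - 1) * ((A c' t : ℝ) : ℂ)) atTop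
      (𝓝 (0 + s * ∫ t in Set.Ioi (1:ℝ), (t : ℂ) ^ (-s - 1) * ((A c' t : ℝ) : ℂ))) :=
    hbdry.add (hints.const_mul s)
  rw [zero_add] at h2
  refine tendsto_nhds_unique (h1.congr' ?_) h2
  filter_upwards [eventually_ge_atTop 1] with m hm
  rw [hps m, show ∑ k ∈ Finset.Icc 0 m, (k : ℂ) ^ (-s) * (c' k : ℂ)
    = ∑ k ∈ Finset.Icc 0 ⌊(m:ℝ)⌋₊, (k : ℂ) ^ (-s) * (c' k : ℂ) by rw [Nat.floor_natCast],
    abel_cpow c' hz s (m:ℝ)]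

include hD in
lemma integrableOn_Dl {s : ℂ} (hs : (3:ℝ)/5 < s.re) {a : ℝ} (ha : 1 ≤ a) :
    IntegrableOn (fun t : ℝ => (t : ℂ) ^ (-s - 1) * ((Dl c' C t : ℝ) : ℂ)) (Set.Ioi a) := by
  refine helper_int (measurable_Dl) s (by linarith) (fun t ht => hD t ?_) hs
  linarith

include hz h0 hC hK hAub hD in
lemma LSeries_decomp (s : ℂ) (hs : 1 < s.re) :
    LSeries (fun n => (c' n : ℂ)) s = C * s / (s - 1) + s * G c' C s := by
  have hICt : IntegrableOn (fun t : ℝ => (t : ℂ) ^ (-s - 1) * ((C * t : ℝ) : ℂ)) (Set.Ioi 1) := by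
    refine helper_int (M := C) (e := (1:ℝ)) (measurable_const.mul measurable_id) s one_pos
      (fun t ht => ?_) (show (1:ℝ) < s.re by linarith)
    have ht0 : (0:ℝ) ≤ t := by linarith
    simp only [Pi.mul_apply, id]
    rw [abs_of_nonneg (by positivity : (0:ℝ) ≤ C * t), Real.rpow_one]
  have hIDl : IntegrableOn (fun t : ℝ => (t : ℂ) ^ (-s - 1) * ((Dl c' C t : ℝ) : ℂ))
      (Set.Ioi (1:ℝ)) := integrableOn_Dl hD (by linarith) le_rfl
  rw [LSeries_eq_integral hz h0 hC hK hAub s hs]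
  have hsplit : ∫ t in Set.Ioi (1:ℝ), (t : ℂ) ^ (-s - 1) * ((A c' t : ℝ) : ℂ)
      = (∫ t in Set.Ioi (1:ℝ), (t : ℂ) ^ (-s - 1) * ((C * t : ℝ) : ℂ))
        + ∫ t in Set.Ioi (1:ℝ), (t : ℂ) ^ (-s - 1) * ((Dl c' C t : ℝ) : ℂ) := by
    rw [← integral_add hICt hIDl]
    refine setIntegral_congr_fun measurableSet_Ioi (fun t ht => ?_)
    rw [Dl]
    push_cast
    ring
  have hCt : ∫ t in Set.Ioi (1:ℝ), (t : ℂ) ^ (-s - 1) * ((C * t : ℝ) : ℂ)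
      = C * (1 / (s - 1)) := by
    have h1 : ∫ t in Set.Ioi (1:ℝ), (t : ℂ) ^ (-s - 1) * ((C * t : ℝ) : ℂ)
        = ∫ t in Set.Ioi (1:ℝ), (C : ℂ) * (t : ℂ) ^ (-s) := by
      refine setIntegral_congr_fun measurableSet_Ioi (fun t ht => ?_)
      have ht0 : (t : ℂ) ≠ 0 := by
        simp only [ne_eq, Complex.ofReal_eq_zero]
        exact (lt_trans one_pos ht).ne'
      rw [show (-s : ℂ) = -s - 1 + 1 by ring, Complex.cpow_add _ _ ht0, Complex.cpow_one]
      push_cast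
      ring
    rw [h1, integral_const_mul, integral_Ioi_cpow_of_lt (by simp; linarith) one_pos]
    rw [Complex.ofReal_one, Complex.one_cpow]
    congr 1
    rw [show -s + 1 = -(s - 1) by ring, div_neg, neg_div, neg_neg]
  rw [hsplit, hCt, G, mul_add]
  congr 1
  field_simp

include hK hD in
lemma continuousAt_G {s₀ : ℂ} (hs₀ : (9:ℝ)/10 < s₀.re) : ContinuousAt (G c' C) s₀ := by
  have hmeasD : Measurable (Dl c' C) := (measurable_A c').sub (measurable_const.mul measurable_id)
  refine continuousAt_of_dominated (bound := fun t => K * t ^ ((3:ℝ)/5 - 19/10)) ?_ ?_ ?_ ?_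
  · filter_upwards with s
    refine AEStronglyMeasurable.mul ?_ ((Complex.measurable_ofReal.comp hmeasD).aestronglyMeasurable)
    refine ContinuousOn.aestronglyMeasurable (fun t ht => ?_) measurableSet_Ioi
    exact (Complex.continuousAt_ofReal_cpow_const t _
      (Or.inr (lt_trans one_pos ht).ne')).continuousWithinAt
  · have hev : ∀ᶠ s : ℂ in 𝓝 s₀, (9:ℝ)/10 < s.re :=
      (isOpen_lt continuous_const Complex.continuous_re).mem_nhds hs₀
    filter_upwards [hev] with s hs
    filter_upwards [ae_restrict_mem measurableSet_Ioi] with t ht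
    have ht1 : (1:ℝ) < t := ht
    have ht0 : (0:ℝ) < t := lt_trans one_pos ht1
    rw [norm_mul, Complex.norm_cpow_eq_rpow_re_of_pos ht0,
      Complex.norm_real, Real.norm_eq_abs]
    calc t ^ ((-s - 1).re) * |Dl c' C t| ≤ t ^ ((-s - 1).re) * (K * t ^ ((3:ℝ)/5)) :=
          mul_le_mul_of_nonneg_left (hD t ht1.le) (Real.rpow_nonneg ht0.le _)
      _ ≤ t ^ (-(19:ℝ)/10) * (K * t ^ ((3:ℝ)/5)) := by
          refine mul_le_mul_of_nonneg_right ?_ (by positivity)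
          refine Real.rpow_le_rpow_of_exponent_le ht1.le ?_
          simp only [Complex.sub_re, Complex.neg_re, Complex.one_re]
          linarith
      _ = K * t ^ ((3:ℝ)/5 - 19/10) := by
          rw [show (3:ℝ)/5 - 19/10 = (3:ℝ)/5 + (-(19:ℝ)/10) by ring, Real.rpow_add ht0]
          ring
  · exact (integrableOn_Ioi_rpow_of_lt (by norm_num) one_pos).const_mul K
  · filter_upwards [ae_restrict_mem measurableSet_Ioi] with t ht
    have ht0 : (t : ℂ) ≠ 0 := by
      simp only [ne_eq, Complex.ofReal_eq_zero]
      exact (lt_trans one_pos ht).ne'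
    exact ((Continuous.const_cpow (by fun_prop) (Or.inl ht0)).mul continuous_const).continuousAt

include h0 hC hK hAub in
lemma intOn_Ioc_cpow_A {s : ℂ} (hs : 0 ≤ s.re) {b : ℝ} (hb : 1 ≤ b) :
    IntegrableOn (fun t : ℝ => (t : ℂ) ^ (-s - 1) * ((A c' t : ℝ) : ℂ)) (Set.Ioc 1 b) := by
  have haesm : AEStronglyMeasurable (fun t : ℝ => (t : ℂ) ^ (-s - 1) * ((A c' t : ℝ) : ℂ))
      (volume.restrict (Set.Ioc 1 b)) := by
    refine AEStronglyMeasurable.mul ?_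
      ((Complex.measurable_ofReal.comp (measurable_A c')).aestronglyMeasurable)
    refine ContinuousOn.aestronglyMeasurable (fun t ht => ?_) measurableSet_Ioc
    exact (Complex.continuousAt_ofReal_cpow_const t _
      (Or.inr (lt_trans one_pos ht.1).ne')).continuousWithinAt
  refine Integrable.mono' (g := fun _ => C + K) ((integrableOn_const_iff).mpr
    (Or.inr measure_Ioc_lt_top)) haesm ?_
  filter_upwards [ae_restrict_mem measurableSet_Ioc] with t ht
  have ht1 : (1:ℝ) ≤ t := ht.1.le
  have ht0 : (0:ℝ) < t := by linarith
  rw [norm_mul, Complex.norm_cpow_eq_rpow_re_of_pos ht0,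
    Complex.norm_real, Real.norm_eq_abs, abs_of_nonneg (A_nonneg h0 t)]
  calc t ^ ((-s - 1).re) * A c' t ≤ t ^ ((-s - 1).re) * ((C + K) * t) :=
        mul_le_mul_of_nonneg_left (hAub t ht1) (Real.rpow_nonneg ht0.le _)
    _ = (C + K) * (t ^ ((-s - 1).re) * t ^ (1:ℝ)) := by rw [Real.rpow_one]; ring
    _ = (C + K) * t ^ (-s.re) := by
        rw [← Real.rpow_add ht0]
        congr 2
        simp only [Complex.sub_re, Complex.neg_re, Complex.one_re]
        ring
    _ ≤ (C + K) * 1 := by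
        refine mul_le_mul_of_nonneg_left
          (Real.rpow_le_one_of_one_le_of_nonpos ht1 (by linarith)) (by linarith)
    _ = C + K := mul_one _

include h0 hC hK hAub in
lemma intOn_Ioc_cpow_Ct {s : ℂ} (hs : 0 ≤ s.re) {b : ℝ} (hb : 1 ≤ b) :
    IntegrableOn (fun t : ℝ => (t : ℂ) ^ (-s - 1) * ((C * t : ℝ) : ℂ)) (Set.Ioc 1 b) := by
  have haesm : AEStronglyMeasurable (fun t : ℝ => (t : ℂ) ^ (-s - 1) * ((C * t : ℝ) : ℂ))
      (volume.restrict (Set.Ioc 1 b)) := by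
    refine AEStronglyMeasurable.mul ?_
      ((Complex.measurable_ofReal.comp (measurable_const.mul measurable_id)).aestronglyMeasurable)
    refine ContinuousOn.aestronglyMeasurable (fun t ht => ?_) measurableSet_Ioc
    exact (Complex.continuousAt_ofReal_cpow_const t _
      (Or.inr (lt_trans one_pos ht.1).ne')).continuousWithinAt
  refine Integrable.mono' (g := fun _ => C) ((integrableOn_const_iff).mpr
    (Or.inr measure_Ioc_lt_top)) haesm ?_
  filter_upwards [ae_restrict_mem measurableSet_Ioc] with t ht
  have ht1 : (1:ℝ) ≤ t := ht.1.le
  have ht0 : (0:ℝ) < t := by linarith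
  rw [norm_mul, Complex.norm_cpow_eq_rpow_re_of_pos ht0,
    Complex.norm_real, Real.norm_eq_abs, abs_of_nonneg (by positivity : (0:ℝ) ≤ C * t)]
  calc t ^ ((-s - 1).re) * (C * t) = C * (t ^ ((-s - 1).re) * t ^ (1:ℝ)) := by
        rw [Real.rpow_one]; ring
    _ = C * t ^ (-s.re) := by
        rw [← Real.rpow_add ht0]
        congr 2
        simp only [Complex.sub_re, Complex.neg_re, Complex.one_re]
        ring
    _ ≤ C * 1 := mul_le_mul_of_nonneg_left
        (Real.rpow_le_one_of_one_le_of_nonpos ht1 (by linarith)) hC.le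
    _ = C := mul_one _

include hz h0 hC hK hAub hD in
lemma F_eq_at {s₀ : ℂ} (hre : (3:ℝ)/5 < s₀.re) (hre1 : s₀.re ≤ 1) (hne : s₀ ≠ 1)
    {NR : ℝ} (hNR : 1 ≤ NR) :
    C * s₀ / (s₀ - 1) + s₀ * G c' C s₀
      = (∑ k ∈ Finset.Icc 0 ⌊NR⌋₊, (k : ℂ) ^ (-s₀) * (c' k : ℂ))
        - (NR : ℂ) ^ (-s₀) * (A c' NR : ℂ)
        - C * s₀ * (((NR : ℂ) ^ (-s₀ + 1) - 1) / (-s₀ + 1))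
        + C * s₀ / (s₀ - 1)
        + s₀ * ∫ t in Set.Ioi NR, (t : ℂ) ^ (-s₀ - 1) * ((Dl c' C t : ℝ) : ℂ) := by
  have hs0 : (0:ℝ) ≤ s₀.re := by linarith
  have hIDl1 : IntegrableOn (fun t : ℝ => (t : ℂ) ^ (-s₀ - 1) * ((Dl c' C t : ℝ) : ℂ))
      (Set.Ioi (1:ℝ)) := integrableOn_Dl hD hre le_rfl
  -- split G at NR
  have hsplit : G c' C s₀ = (∫ t in Set.Ioc (1:ℝ) NR, (t : ℂ) ^ (-s₀ - 1) * ((Dl c' C t : ℝ) : ℂ))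
      + ∫ t in Set.Ioi NR, (t : ℂ) ^ (-s₀ - 1) * ((Dl c' C t : ℝ) : ℂ) := by
    rw [G, ← Set.Ioc_union_Ioi_eq_Ioi hNR]
    exact setIntegral_union (Set.Ioc_disjoint_Ioi le_rfl) measurableSet_Ioi
      (hIDl1.mono_set Set.Ioc_subset_Ioi_self)
      (hIDl1.mono_set (Set.Ioi_subset_Ioi hNR))
  -- the Ioc part of the Dl integral
  have hIoc : ∫ t in Set.Ioc (1:ℝ) NR, (t : ℂ) ^ (-s₀ - 1) * ((Dl c' C t : ℝ) : ℂ)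
      = (∫ t in Set.Ioc (1:ℝ) NR, (t : ℂ) ^ (-s₀ - 1) * ((A c' t : ℝ) : ℂ))
        - ∫ t in Set.Ioc (1:ℝ) NR, (t : ℂ) ^ (-s₀ - 1) * ((C * t : ℝ) : ℂ) := by
    rw [← integral_sub (intOn_Ioc_cpow_A h0 hC hK hAub hs0 hNR)
      (intOn_Ioc_cpow_Ct h0 hC hK hAub hs0 hNR)]
    refine setIntegral_congr_fun measurableSet_Ioc (fun t ht => ?_)
    rw [Dl]
    push_cast
    ring
  -- Abel identity at s₀
  have habel := abel_cpow c' hz s₀ NR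
  -- evaluate the Ct integral
  have hCt : ∫ t in Set.Ioc (1:ℝ) NR, (t : ℂ) ^ (-s₀ - 1) * ((C * t : ℝ) : ℂ)
      = C * (((NR : ℂ) ^ (-s₀ + 1) - 1) / (-s₀ + 1)) := by
    have h1 : ∫ t in Set.Ioc (1:ℝ) NR, (t : ℂ) ^ (-s₀ - 1) * ((C * t : ℝ) : ℂ)
        = ∫ t in Set.Ioc (1:ℝ) NR, (C : ℂ) * (t : ℂ) ^ (-s₀) := by
      refine setIntegral_congr_fun measurableSet_Ioc (fun t ht => ?_)
      have ht0 : (t : ℂ) ≠ 0 := by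
        simp only [ne_eq, Complex.ofReal_eq_zero]
        exact (lt_trans one_pos ht.1).ne'
      rw [show (-s₀ : ℂ) = -s₀ - 1 + 1 by ring, Complex.cpow_add _ _ ht0, Complex.cpow_one]
      push_cast
      ring
    rw [h1, integral_const_mul, ← intervalIntegral.integral_of_le hNR,
      integral_cpow (Or.inr ⟨?_, ?_⟩)]
    · rw [Complex.ofReal_one, Complex.one_cpow]
    · intro h
      apply hne
      have := neg_eq_iff_eq_neg.mp h
      simpa using congrArg Neg.neg h
    · intro h
      rcases Set.mem_uIcc.mp h with h' | h' <;> linarith [h'.1, h'.2]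
  have hfin : s₀ * ∫ t in Set.Ioc (1:ℝ) NR, (t : ℂ) ^ (-s₀ - 1) * ((A c' t : ℝ) : ℂ)
      = (∑ k ∈ Finset.Icc 0 ⌊NR⌋₊, (k : ℂ) ^ (-s₀) * (c' k : ℂ))
        - (NR : ℂ) ^ (-s₀) * (A c' NR : ℂ) := by
    rw [habel]; ring
  rw [hsplit, mul_add, hIoc, mul_sub, hfin, hCt]
  ring

include hz h0 hC hK hAub in
lemma head_bound {NR : ℝ} (hNR : 1 ≤ NR) :
    ∑ k ∈ Finset.Icc 0 ⌊NR⌋₊, (k : ℝ) ^ (-(1:ℝ)) * c' k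
      ≤ (C + K) * (1 + Real.log NR) := by
  have hCK : 0 ≤ C + K := by linarith
  rw [abel_rpow c' hz 1 NR]
  have h1 : NR ^ (-(1:ℝ)) * A c' NR ≤ C + K := by
    calc NR ^ (-(1:ℝ)) * A c' NR ≤ NR ^ (-(1:ℝ)) * ((C + K) * NR) :=
          mul_le_mul_of_nonneg_left (hAub _ hNR) (Real.rpow_nonneg (by linarith) _)
      _ = (C + K) * (NR ^ (-(1:ℝ)) * NR ^ (1:ℝ)) := by rw [Real.rpow_one]; ring
      _ = C + K := by rw [← Real.rpow_add (by linarith : (0:ℝ) < NR)]; norm_num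
  have hbd : ∀ t : ℝ, t ∈ Set.Ioc (1:ℝ) NR →
      t ^ (-(1:ℝ) - 1) * A c' t ≤ (C + K) * t⁻¹ := by
    intro t ht
    have ht1 : (1:ℝ) ≤ t := ht.1.le
    have ht0 : (0:ℝ) < t := by linarith
    calc t ^ (-(1:ℝ) - 1) * A c' t ≤ t ^ (-(1:ℝ) - 1) * ((C + K) * t) :=
          mul_le_mul_of_nonneg_left (hAub t ht1) (Real.rpow_nonneg ht0.le _)
      _ = (C + K) * (t ^ (-(1:ℝ) - 1) * t ^ (1:ℝ)) := by rw [Real.rpow_one]; ring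
      _ = (C + K) * t ^ (-(1:ℝ)) := by rw [← Real.rpow_add ht0]; norm_num
      _ = (C + K) * t⁻¹ := by rw [Real.rpow_neg_one]
  have hIntR : IntegrableOn (fun t : ℝ => (C + K) * t⁻¹) (Set.Ioc (1:ℝ) NR) := by
    refine (ContinuousOn.integrableOn_Icc ?_).mono_set Set.Ioc_subset_Icc_self
    exact continuousOn_const.mul (continuousOn_inv₀.mono (fun t ht => by
      intro h; rw [h] at ht; exact absurd ht.1 (by norm_num)))
  have hIntL : IntegrableOn (fun t : ℝ => t ^ (-(1:ℝ) - 1) * A c' t) (Set.Ioc (1:ℝ) NR) := by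
    refine Integrable.mono' (g := fun _ => C + K) ((integrableOn_const_iff).mpr
      (Or.inr measure_Ioc_lt_top)) ((measurable_id.pow_const _).mul
        (measurable_A c')).aestronglyMeasurable ?_
    filter_upwards [ae_restrict_mem measurableSet_Ioc] with t ht
    have ht1 : (1:ℝ) ≤ t := ht.1.le
    have ht0 : (0:ℝ) < t := by linarith
    rw [Real.norm_eq_abs, abs_of_nonneg (mul_nonneg (Real.rpow_nonneg ht0.le _) (A_nonneg h0 t))]
    refine (hbd t ht).trans ?_
    have : t⁻¹ ≤ 1 := by
      rw [inv_le_one_iff₀]; right; linarith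
    calc (C + K) * t⁻¹ ≤ (C + K) * 1 := mul_le_mul_of_nonneg_left this hCK
      _ = C + K := mul_one _
  have h2 : ∫ t in Set.Ioc (1:ℝ) NR, t ^ (-(1:ℝ) - 1) * A c' t
      ≤ ∫ t in Set.Ioc (1:ℝ) NR, (C + K) * t⁻¹ := by
    refine integral_mono_ae hIntL hIntR ?_
    filter_upwards [ae_restrict_mem measurableSet_Ioc] with t ht using hbd t ht
  have h3 : ∫ t in Set.Ioc (1:ℝ) NR, (C + K) * t⁻¹ = (C + K) * Real.log NR := by
    rw [integral_const_mul, ← intervalIntegral.integral_of_le hNR,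
      integral_inv_of_pos one_pos (by linarith : (0:ℝ) < NR), div_one]
  calc NR ^ (-(1:ℝ)) * A c' NR + 1 * ∫ t in Set.Ioc (1:ℝ) NR, t ^ (-(1:ℝ) - 1) * A c' t
      ≤ (C + K) + 1 * ((C + K) * Real.log NR) := by
        refine add_le_add h1 ?_
        rw [one_mul, one_mul]
        exact h2.trans_eq h3
    _ = (C + K) * (1 + Real.log NR) := by ring

include hz h0 hC hK hAub hD in
set_option maxHeartbeats 1000000 in
theorem key_bound (Z : ℂ → ℂ)
    (hZhol : DifferentiableOn ℂ Z {s : ℂ | (3 : ℝ) / 5 < s.re ∧ s ≠ 1})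
    (hZser : ∀ s : ℂ, 1 < s.re → Z s = LSeries (fun n => (c' n : ℂ)) s)
    (t : ℝ) (ht : 2 ≤ t) :
    ‖Z (1 + t * Complex.I)‖ ≤ (18 * C + 16 * K) * Real.log t := by
  set s₀ : ℂ := 1 + t * Complex.I with hs₀def
  have ht0 : (0:ℝ) < t := by linarith
  have hs₀re : s₀.re = 1 := by simp [hs₀def]
  have hs₀im : s₀.im = t := by simp [hs₀def]
  have hs₀ne : s₀ ≠ 1 := by
    intro h
    have : s₀.im = 0 := by rw [h]; simp
    rw [hs₀im] at this; linarith
  have hnorm_s₀ : ‖s₀‖ ≤ 1 + t := by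
    calc ‖s₀‖ ≤ ‖(1:ℂ)‖ + ‖(t:ℝ) * Complex.I‖ := norm_add_le _ _
      _ = 1 + t := by
          rw [norm_one, norm_mul, Complex.norm_I, mul_one, Complex.norm_real,
            Real.norm_eq_abs, abs_of_pos ht0]
  have hnorm_s₀1 : ‖s₀ - 1‖ = t := by
    rw [show s₀ - 1 = (t:ℝ) * Complex.I by rw [hs₀def]; ring, norm_mul, Complex.norm_I,
      mul_one, Complex.norm_real, Real.norm_eq_abs, abs_of_pos ht0]
  -- Step 1 : Z s₀ = C s₀/(s₀-1) + s₀ G s₀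
  have hZeq : Z s₀ = C * s₀ / (s₀ - 1) + s₀ * G c' C s₀ := by
    have hUopen : IsOpen {s : ℂ | (3 : ℝ) / 5 < s.re ∧ s ≠ 1} := by
      have : {s : ℂ | (3 : ℝ) / 5 < s.re ∧ s ≠ 1}
          = {s : ℂ | (3 : ℝ) / 5 < s.re} ∩ {(1 : ℂ)}ᶜ := by
        ext s; simp [Set.mem_setOf_eq]
      rw [this]
      exact (isOpen_lt continuous_const Complex.continuous_re).inter isOpen_compl_singleton
    have hs₀mem : s₀ ∈ {s : ℂ | (3 : ℝ) / 5 < s.re ∧ s ≠ 1} := by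
      refine ⟨?_, hs₀ne⟩
      rw [hs₀re]; norm_num
    have hZcont : ContinuousAt Z s₀ :=
      (hZhol.differentiableAt (hUopen.mem_nhds hs₀mem)).continuousAt
    have hFcont : ContinuousAt (fun s => C * s / (s - 1) + s * G c' C s) s₀ := by
      refine ContinuousAt.add ?_ ?_
      · exact ((continuous_const.mul continuous_id).continuousAt).div
          ((continuous_id.sub continuous_const).continuousAt) (sub_ne_zero.mpr hs₀ne)
      · exact continuousAt_id.mul (continuousAt_G hK hD (by rw [hs₀re]; norm_num))
    set u : ℕ → ℂ := fun j => s₀ + ((1 / (j + 1 : ℝ) : ℝ) : ℂ) with hu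
    have hulim : Tendsto u atTop (𝓝 s₀) := by
      have h1 : Tendsto (fun j : ℕ => ((1 / (j + 1 : ℝ) : ℝ) : ℂ)) atTop (𝓝 ((0:ℝ):ℂ)) :=
        (Complex.continuous_ofReal.tendsto 0).comp tendsto_one_div_add_atTop_nhds_zero_nat
      have h2 := (tendsto_const_nhds (x := s₀) (f := (atTop : Filter ℕ))).add h1
      simp only [Complex.ofReal_zero, add_zero] at h2
      exact h2
    have hre_u : ∀ j : ℕ, 1 < (u j).re := by
      intro j
      have huj : u j = s₀ + ((1 / (j + 1 : ℝ) : ℝ) : ℂ) := rfl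
      have : (u j).re = 1 + 1 / (j + 1 : ℝ) := by
        rw [huj, Complex.add_re, Complex.ofReal_re, hs₀re]
      rw [this]
      have : 0 < 1 / (j + 1 : ℝ) := by positivity
      linarith
    have heq : ∀ j : ℕ, Z (u j) = C * u j / (u j - 1) + u j * G c' C (u j) := by
      intro j
      rw [hZser _ (hre_u j), LSeries_decomp hz h0 hC hK hAub hD _ (hre_u j)]
    refine tendsto_nhds_unique (hZcont.tendsto.comp hulim) ?_
    have := (hFcont.tendsto.comp hulim).congr (fun j => (heq j).symm)
    exact this
  -- Step 2 : choose N and bound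
  set tp : ℝ := t ^ ((5:ℝ)/2) with htp
  have htp1 : 1 ≤ tp := Real.one_le_rpow (by linarith) (by norm_num)
  set NR : ℝ := (⌈tp⌉₊ : ℝ) with hNRdef
  have hNRge : tp ≤ NR := Nat.le_ceil tp
  have hNR1 : 1 ≤ NR := le_trans htp1 hNRge
  have hNR0 : 0 < NR := by linarith
  have hNRle : NR ≤ 2 * tp := by
    have := Nat.ceil_lt_add_one (show (0:ℝ) ≤ tp by linarith)
    rw [hNRdef]
    linarith
  rw [hZeq, F_eq_at hz h0 hC hK hAub hD (by rw [hs₀re]; norm_num) (by rw [hs₀re]) hs₀ne hNR1]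
  have hCK : 0 ≤ C + K := by linarith
  -- head bound
  have hhead : ‖∑ k ∈ Finset.Icc 0 ⌊NR⌋₊, (k : ℂ) ^ (-s₀) * (c' k : ℂ)‖
      ≤ (C + K) * (1 + Real.log NR) := by
    refine le_trans (norm_sum_le _ _) (le_trans ?_ (head_bound hz h0 hC hK hAub hNR1))
    refine Finset.sum_le_sum fun k _ => ?_
    rcases Nat.eq_zero_or_pos k with rfl | hk
    · simp [hz]
    · have hk0 : (0:ℝ) < (k:ℝ) := by exact_mod_cast hk
      rw [norm_mul, Complex.norm_real, Real.norm_eq_abs, abs_of_nonneg (h0 k),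
        show ((k:ℕ):ℂ) = (((k:ℝ)):ℂ) by push_cast; rfl, Complex.norm_cpow_eq_rpow_re_of_pos hk0, Complex.neg_re, hs₀re]
  -- boundary term
  have hbdry : ‖(NR : ℂ) ^ (-s₀) * (A c' NR : ℂ)‖ ≤ C + K := by
    rw [norm_mul, Complex.norm_cpow_eq_rpow_re_of_pos hNR0,
      Complex.norm_real, Real.norm_eq_abs, abs_of_nonneg (A_nonneg h0 NR), Complex.neg_re, hs₀re]
    calc NR ^ (-1:ℝ) * A c' NR ≤ NR ^ (-1:ℝ) * ((C + K) * NR) :=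
          mul_le_mul_of_nonneg_left (hAub NR hNR1) (Real.rpow_nonneg hNR0.le _)
      _ = (C + K) * (NR ^ (-1:ℝ) * NR ^ (1:ℝ)) := by rw [Real.rpow_one]; ring
      _ = C + K := by rw [← Real.rpow_add hNR0]; norm_num
  -- B2 term
  have hB2 : ‖C * s₀ * (((NR : ℂ) ^ (-s₀ + 1) - 1) / (-s₀ + 1))‖ ≤ 3 * C := by
    have h1 : ‖(NR : ℂ) ^ (-s₀ + 1)‖ = 1 := by
      rw [Complex.norm_cpow_eq_rpow_re_of_pos hNR0]
      simp [hs₀re, Real.rpow_zero]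
    have h2 : ‖(NR : ℂ) ^ (-s₀ + 1) - 1‖ ≤ 2 := by
      calc ‖(NR : ℂ) ^ (-s₀ + 1) - 1‖ ≤ ‖(NR : ℂ) ^ (-s₀ + 1)‖ + ‖(1:ℂ)‖ := norm_sub_le _ _
        _ = 2 := by rw [h1, norm_one]; norm_num
    have h3 : ‖(-s₀ + 1 : ℂ)‖ = t := by
      rw [show (-s₀ + 1 : ℂ) = -(s₀ - 1) by ring, norm_neg, hnorm_s₀1]
    rw [norm_mul, norm_mul, norm_div, h3, Complex.norm_real, Real.norm_eq_abs, abs_of_pos hC,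
      show C * ‖s₀‖ * (‖(NR : ℂ) ^ (-s₀ + 1) - 1‖ / t)
        = C * ‖s₀‖ * ‖(NR : ℂ) ^ (-s₀ + 1) - 1‖ / t by ring, div_le_iff₀ ht0]
    have hab : ‖s₀‖ * ‖(NR : ℂ) ^ (-s₀ + 1) - 1‖ ≤ (1 + t) * 2 :=
      mul_le_mul hnorm_s₀ h2 (norm_nonneg _) (by positivity)
    nlinarith [mul_le_mul_of_nonneg_left hab hC.le]
  -- B3 term
  have hB3 : ‖C * s₀ / (s₀ - 1)‖ ≤ 2 * C := by
    rw [norm_div, norm_mul, hnorm_s₀1, Complex.norm_real, Real.norm_eq_abs, abs_of_pos hC,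
      div_le_iff₀ ht0]
    nlinarith [mul_le_mul_of_nonneg_left hnorm_s₀ hC.le]
  -- B4 term
  have hB4 : ‖s₀ * ∫ t' in Set.Ioi NR, (t' : ℂ) ^ (-s₀ - 1) * ((Dl c' C t' : ℝ) : ℂ)‖
      ≤ 4 * K := by
    rw [norm_mul]
    have h1 : ‖∫ t' in Set.Ioi NR, (t' : ℂ) ^ (-s₀ - 1) * ((Dl c' C t' : ℝ) : ℂ)‖
        ≤ K * NR ^ ((3:ℝ)/5 - 1) / (1 - 3/5) := by
      have := helper_norm (measurable_Dl (c' := c') (C := C)) s₀ hNR0 hK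
        (fun x hx => hD x (le_trans hNR1 hx)) (by rw [hs₀re]; norm_num)
      rwa [hs₀re] at this
    have h2 : NR ^ ((3:ℝ)/5 - 1) ≤ 1 / t := by
      have ha : NR ^ ((3:ℝ)/5 - 1) ≤ tp ^ ((3:ℝ)/5 - 1) :=
        Real.rpow_le_rpow_of_nonpos (by linarith) hNRge (by norm_num)
      have hb : tp ^ ((3:ℝ)/5 - 1) = 1 / t := by
        rw [htp, ← Real.rpow_mul ht0.le, show (5:ℝ)/2 * (3/5 - 1) = -1 by norm_num,
          Real.rpow_neg_one, one_div]
      rw [← hb]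
      exact ha
    have h3 : K * NR ^ ((3:ℝ)/5 - 1) / (1 - 3/5) ≤ 5/2 * K * (1/t) := by
      rw [show (1:ℝ) - 3/5 = 2/5 by norm_num, div_eq_mul_inv,
        show ((2:ℝ)/5)⁻¹ = 5/2 by norm_num]
      calc K * NR ^ ((3:ℝ)/5 - 1) * (5/2) ≤ K * (1/t) * (5/2) :=
            mul_le_mul_of_nonneg_right (mul_le_mul_of_nonneg_left h2 hK) (by norm_num)
        _ = 5/2 * K * (1/t) := by ring
    have h4 := mul_le_mul hnorm_s₀ (h1.trans h3) (norm_nonneg _) (by positivity)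
    refine h4.trans ?_
    rw [show (1 + t) * (5/2 * K * (1/t)) = 5/2 * K * (1 + t) / t by field_simp,
      div_le_iff₀ ht0]
    nlinarith
  -- combine
  have hsum5 := (norm_add_le _ _).trans (add_le_add ((norm_add_le _ _).trans (add_le_add
    ((norm_sub_le _ _).trans (add_le_add ((norm_sub_le _ _).trans
      (add_le_add hhead hbdry)) hB2)) hB3)) hB4)
  refine hsum5.trans ?_
  have hM0 : 0 ≤ Real.log NR := Real.log_nonneg hNR1
  have hlogNR : Real.log NR ≤ 7/2 * Real.log t := by
    have h1 : Real.log NR ≤ Real.log (2 * tp) := Real.log_le_log hNR0 hNRle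
    have h2 : Real.log (2 * tp) = Real.log 2 + Real.log tp :=
      Real.log_mul (by norm_num) (by linarith)
    have h3 : Real.log tp = (5/2) * Real.log t := by rw [htp, Real.log_rpow ht0]
    have h4 : Real.log 2 ≤ Real.log t := Real.log_le_log (by norm_num) ht
    rw [h2, h3] at h1
    linarith
  have hlogt : 1/2 ≤ Real.log t := by
    have h4 : Real.log 2 ≤ Real.log t := Real.log_le_log (by norm_num) ht
    have := Real.log_two_gt_d9
    linarith
  nlinarith [mul_le_mul_of_nonneg_left hlogNR hCK,
    mul_le_mul_of_nonneg_left hlogt (show (0:ℝ) ≤ 14.5*C + 12.5*K by linarith)]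

end

end RankinSelbergAux

open RankinSelbergAux in
/-- Concluding remark of Section 4: if `∑_{n ≤ x} c n = C x + O(x^{3/5})` and `Z` is the
associated Dirichlet series, holomorphic on `Re s > 3/5` except at `s = 1`, then
`Z(1+it) ≪ log t` for `t ≥ 2`. -/
theorem rankin_selberg_log_bound_on_one_line
    (c : ℕ → ℝ) (hc0 : ∀ n, 0 ≤ c n)
    (C : ℝ) (hC : 0 < C)
    (hΔ : ∃ K : ℝ, ∀ x : ℝ, 1 ≤ x →
      |(∑ n ∈ Finset.Icc 1 ⌊x⌋₊, c n) - C * x| ≤ K * x ^ ((3 : ℝ) / 5))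
    (Z : ℂ → ℂ)
    (hZhol : DifferentiableOn ℂ Z {s : ℂ | (3 : ℝ) / 5 < s.re ∧ s ≠ 1})
    (hZser : ∀ s : ℂ, 1 < s.re → Z s = LSeries (fun n => (c n : ℂ)) s) :
    ∃ K : ℝ, ∀ t : ℝ, 2 ≤ t → ‖Z (1 + t * Complex.I)‖ ≤ K * Real.log t := by
  obtain ⟨K, hKbd⟩ := hΔ
  have hK0 : 0 ≤ K := by
    have h1 := hKbd 1 le_rfl
    have h2 : (0:ℝ) ≤ K * 1 ^ ((3:ℝ)/5) := le_trans (abs_nonneg _) h1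
    simpa using h2
  set c' : ℕ → ℝ := fun n => if n = 0 then 0 else c n with hc'
  have hz : c' 0 = 0 := by simp [hc']
  have h0 : ∀ n, 0 ≤ c' n := by
    intro n
    by_cases h : n = 0 <;> simp [hc', h, hc0 n]
  have hAeq : ∀ x : ℝ, A c' x = ∑ n ∈ Finset.Icc 1 ⌊x⌋₊, c n := by
    intro x
    rw [A, Finset.Icc_eq_cons_Ioc (Nat.zero_le _), Finset.sum_cons, hz, zero_add,
      ← Finset.Icc_add_one_left_eq_Ioc]
    refine Finset.sum_congr rfl fun k hk => ?_
    have hk1 : k ≠ 0 := by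
      have := (Finset.mem_Icc.mp hk).1
      omega
    simp [hc', hk1]
  have hDbd : ∀ x : ℝ, 1 ≤ x → |Dl c' C x| ≤ K * x ^ ((3:ℝ)/5) := by
    intro x hx
    show |A c' x - C * x| ≤ K * x ^ ((3:ℝ)/5)
    rw [hAeq]
    exact hKbd x hx
  have hAub : ∀ x : ℝ, 1 ≤ x → A c' x ≤ (C + K) * x := by
    intro x hx
    have h1 : |A c' x - C * x| ≤ K * x ^ ((3:ℝ)/5) := hDbd x hx
    have h2 : A c' x - C * x ≤ K * x ^ ((3:ℝ)/5) := (abs_le.mp h1).2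
    have h3 : x ^ ((3:ℝ)/5) ≤ x := by
      calc x ^ ((3:ℝ)/5) ≤ x ^ (1:ℝ) := Real.rpow_le_rpow_of_exponent_le hx (by norm_num)
        _ = x := Real.rpow_one x
    nlinarith [mul_le_mul_of_nonneg_left h3 hK0]
  have hser : ∀ s : ℂ, 1 < s.re → Z s = LSeries (fun n => (c' n : ℂ)) s := by
    intro s hs
    rw [hZser s hs]
    refine LSeries_congr (fun {n} hn => ?_) s
    simp [hc', hn]
  exact ⟨18 * C + 16 * K, fun t ht =>
    key_bound hz h0 hC hK0 hAub hDbd Z hZhol hser t ht⟩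
end
end

section
/- Let 0 ≤ ξ ≤ 1 and let c : ℕ → ℝ satisfy |c_k| = O_ε(k^ε) for every ε > 0. Then for all real X ≥ 1 and 1 ≤ K ≤ X, ∫_X^{2X} |∑_{K < k ≤ 2K} c_k k^{−(5+2ξ)/8} exp(8πi (xk)^{1/4})|² dx = O_ε(X^{1+ε} + X^{3/4+ε} K^{(1−ξ)/2}) for every ε > 0. -/
open Filter MeasureTheory Finset

noncomputable section


-- 

lemma osc_integral (μ : ℝ) (hμ : μ ≠ 0) (X : ℝ) (hX : 1 ≤ X) :
    ‖∫ x in X..(2*X), Complex.exp (Complex.I * ((μ * x ^ ((1:ℝ)/4) : ℝ) : ℂ))‖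
      ≤ 15 * X ^ ((3:ℝ)/4) / |μ| := by
  have hX0 : (0:ℝ) < X := lt_of_lt_of_le one_pos hX
  have h2X : X ≤ 2 * X := by linarith
  have huIcc : Set.uIcc X (2*X) = Set.Icc X (2*X) := Set.uIcc_of_le h2X
  set v : ℝ → ℂ := fun x => Complex.exp (Complex.I * ((μ * x ^ ((1:ℝ)/4) : ℝ) : ℂ)) with hv
  set u : ℝ → ℂ := fun x => ((4 * x ^ ((3:ℝ)/4) : ℝ) : ℂ) / (Complex.I * μ) with hu
  set u' : ℝ → ℂ := fun x => ((3 * x ^ (-(1:ℝ)/4) : ℝ) : ℂ) / (Complex.I * μ) with hu'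
  set v' : ℝ → ℂ := fun x => v x * (Complex.I * ((μ * ((1:ℝ)/4) * x ^ ((1:ℝ)/4 - 1) : ℝ) : ℂ)) with hv'
  have hIμ : Complex.I * μ ≠ 0 := by
    simp [Complex.ext_iff, hμ]
  have hderivu : ∀ x ∈ Set.uIcc X (2*X), HasDerivAt u (u' x) x := by
    intro x hx
    rw [huIcc] at hx
    have hx0 : x ≠ 0 := ne_of_gt (lt_of_lt_of_le hX0 hx.1)
    have h1 : HasDerivAt (fun y : ℝ => y ^ ((3:ℝ)/4)) (((3:ℝ)/4) * x ^ ((3:ℝ)/4 - 1)) x :=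
      Real.hasDerivAt_rpow_const (Or.inl hx0)
    have h2 := (h1.const_mul (4:ℝ)).ofReal_comp.div_const (Complex.I * μ)
    refine h2.congr_deriv ?_
    rw [hu']
    norm_num
    ring
  have hderivv : ∀ x ∈ Set.uIcc X (2*X), HasDerivAt v (v' x) x := by
    intro x hx
    rw [huIcc] at hx
    have hx0 : x ≠ 0 := ne_of_gt (lt_of_lt_of_le hX0 hx.1)
    have h1 : HasDerivAt (fun y : ℝ => y ^ ((1:ℝ)/4)) (((1:ℝ)/4) * x ^ ((1:ℝ)/4 - 1)) x :=
      Real.hasDerivAt_rpow_const (Or.inl hx0)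
    have h2 := ((h1.const_mul μ).ofReal_comp.const_mul Complex.I).cexp
    convert h2 using 1
    rw [hv', hv]
    push_cast
    ring
  have hnormv : ∀ x : ℝ, ‖v x‖ = 1 := by
    intro x
    rw [hv]
    simp only [mul_comm Complex.I]
    exact Complex.norm_exp_ofReal_mul_I _
  have hcontv : ContinuousOn v (Set.uIcc X (2*X)) := by
    intro x hx
    rw [huIcc] at hx
    have hx0 : x ≠ 0 := ne_of_gt (lt_of_lt_of_le hX0 hx.1)
    have h1 : ContinuousAt (fun y : ℝ => y ^ ((1:ℝ)/4)) x :=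
      Real.continuousAt_rpow_const x _ (Or.inl hx0)
    have h2 : ContinuousAt (fun y : ℝ => ((μ * y ^ ((1:ℝ)/4) : ℝ) : ℂ)) x :=
      Complex.continuous_ofReal.continuousAt.comp (h1.const_mul μ)
    exact (Complex.continuous_exp.continuousAt.comp
      (continuousAt_const.mul h2)).continuousWithinAt
  have hcontu' : ContinuousOn u' (Set.uIcc X (2*X)) := by
    intro x hx
    rw [huIcc] at hx
    have hx0 : x ≠ 0 := ne_of_gt (lt_of_lt_of_le hX0 hx.1)
    have h1 : ContinuousAt (fun y : ℝ => y ^ (-(1:ℝ)/4)) x :=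
      Real.continuousAt_rpow_const x _ (Or.inl hx0)
    exact ((Complex.continuous_ofReal.continuousAt.comp
      (h1.const_mul (3:ℝ))).div_const _).continuousWithinAt
  have hcontv' : ContinuousOn v' (Set.uIcc X (2*X)) := by
    apply hcontv.mul
    intro x hx
    rw [huIcc] at hx
    have hx0 : x ≠ 0 := ne_of_gt (lt_of_lt_of_le hX0 hx.1)
    have h1 : ContinuousAt (fun y : ℝ => y ^ ((1:ℝ)/4 - 1)) x :=
      Real.continuousAt_rpow_const x _ (Or.inl hx0)
    exact (continuousAt_const.mul (Complex.continuous_ofReal.continuousAt.comp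
      (h1.const_mul (μ * ((1:ℝ)/4))))).continuousWithinAt
  have hintu' : IntervalIntegrable u' MeasureTheory.volume X (2*X) :=
    hcontu'.intervalIntegrable
  have hintv' : IntervalIntegrable v' MeasureTheory.volume X (2*X) :=
    hcontv'.intervalIntegrable
  have key : (∫ x in X..(2*X), v x) = ∫ x in X..(2*X), u x * v' x := by
    apply intervalIntegral.integral_congr
    intro x hx
    rw [huIcc] at hx
    have hx0' : (0:ℝ) < x := lt_of_lt_of_le hX0 hx.1
    have hxx : x ^ ((3:ℝ)/4) * x ^ ((1:ℝ)/4 - 1) = 1 := by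
      rw [← Real.rpow_add hx0']; norm_num
    have hxxC : ((x ^ ((3:ℝ)/4) : ℝ) : ℂ) * ((x ^ ((1:ℝ)/4 - 1) : ℝ) : ℂ) = 1 := by
      rw [← Complex.ofReal_mul, hxx, Complex.ofReal_one]
    have hscal : (((4 * x ^ ((3:ℝ)/4) : ℝ)):ℂ) *
        (Complex.I * ((μ * ((1:ℝ)/4) * x ^ ((1:ℝ)/4 - 1) : ℝ) : ℂ)) = Complex.I * μ := by
      push_cast
      linear_combination Complex.I * (μ:ℂ) * hxxC
    calc v x = v x * ((Complex.I * μ) / (Complex.I * μ)) := by rw [div_self hIμ, mul_one]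
      _ = v x * ((((4 * x ^ ((3:ℝ)/4) : ℝ)):ℂ) *
          (Complex.I * ((μ * ((1:ℝ)/4) * x ^ ((1:ℝ)/4 - 1) : ℝ) : ℂ)) / (Complex.I * μ)) := by
            rw [hscal]
      _ = u x * v' x := by rw [hu, hv']; ring
  have parts := intervalIntegral.integral_mul_deriv_eq_deriv_mul hderivu hderivv hintu' hintv'
  rw [key, parts]
  have hμ0 : (0:ℝ) < |μ| := abs_pos.mpr hμ
  have hnormIμ : ‖Complex.I * (μ:ℂ)‖ = |μ| := by
    simp [map_mul]
  have hnormu : ∀ x : ℝ, 0 ≤ x → ‖u x‖ = 4 * x ^ ((3:ℝ)/4) / |μ| := by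
    intro x hx
    rw [hu]
    simp only [norm_div, hnormIμ, Complex.norm_real, Real.norm_eq_abs]
    rw [abs_of_nonneg (by positivity)]
  have hXpow : X ^ ((3:ℝ)/4) = X ^ (-(1:ℝ)/4) * X := by
    rw [show (3:ℝ)/4 = -(1:ℝ)/4 + 1 by norm_num, Real.rpow_add hX0, Real.rpow_one]
  have hintbound : ‖∫ x in X..(2*X), u' x * v x‖ ≤ 3 * X ^ ((3:ℝ)/4) / |μ| := by
    have hb : ∀ x ∈ Set.uIoc X (2*X), ‖u' x * v x‖ ≤ 3 * X ^ (-(1:ℝ)/4) / |μ| := by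
      intro x hx
      rw [Set.uIoc_of_le h2X] at hx
      have hx0' : (0:ℝ) < x := lt_of_lt_of_le hX0 hx.1.le
      rw [norm_mul, hnormv, mul_one, hu']
      simp only [norm_div, hnormIμ, Complex.norm_real, Real.norm_eq_abs]
      rw [abs_of_nonneg (by positivity)]
      have hxmono : x ^ (-(1:ℝ)/4) ≤ X ^ (-(1:ℝ)/4) := by
        rw [show -(1:ℝ)/4 = -((1:ℝ)/4) by norm_num, Real.rpow_neg hX0.le,
          Real.rpow_neg hx0'.le]
        exact inv_anti₀ (by positivity)
          (Real.rpow_le_rpow hX0.le hx.1.le (by norm_num))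
      gcongr
    have := intervalIntegral.norm_integral_le_of_norm_le_const hb
    calc ‖∫ x in X..(2*X), u' x * v x‖ ≤ 3 * X ^ (-(1:ℝ)/4) / |μ| * |2*X - X| := this
      _ = 3 * X ^ ((3:ℝ)/4) / |μ| := by
          have habs : |2*X - X| = X := by
            rw [show 2*X - X = X by ring]; exact abs_of_nonneg hX0.le
          rw [habs, hXpow]; ring
  have h2pow : (2*X) ^ ((3:ℝ)/4) ≤ 2 * X ^ ((3:ℝ)/4) := by
    rw [Real.mul_rpow (by norm_num) hX0.le]
    have h22 : (2:ℝ) ^ ((3:ℝ)/4) ≤ 2 := by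
      calc (2:ℝ) ^ ((3:ℝ)/4) ≤ 2 ^ (1:ℝ) :=
            Real.rpow_le_rpow_of_exponent_le one_le_two (by norm_num)
        _ = 2 := Real.rpow_one 2
    exact mul_le_mul_of_nonneg_right h22 (by positivity)
  calc ‖u (2*X) * v (2*X) - u X * v X - ∫ x in X..(2*X), u' x * v x‖
      ≤ ‖u (2*X) * v (2*X) - u X * v X‖ + ‖∫ x in X..(2*X), u' x * v x‖ := norm_sub_le _ _
    _ ≤ ‖u (2*X) * v (2*X)‖ + ‖u X * v X‖ + ‖∫ x in X..(2*X), u' x * v x‖ := by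
        gcongr; exact norm_sub_le _ _
    _ = 4 * (2*X) ^ ((3:ℝ)/4) / |μ| + 4 * X ^ ((3:ℝ)/4) / |μ|
        + ‖∫ x in X..(2*X), u' x * v x‖ := by
        rw [norm_mul, norm_mul, hnormv, hnormv, mul_one, mul_one,
          hnormu _ (by linarith), hnormu _ hX0.le]
    _ ≤ 4 * (2 * X ^ ((3:ℝ)/4)) / |μ| + 4 * X ^ ((3:ℝ)/4) / |μ| + 3 * X ^ ((3:ℝ)/4) / |μ| := by
        gcongr
    _ = 15 * X ^ ((3:ℝ)/4) / |μ| := by ring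

lemma sum_inv_Icc_le (n : ℕ) :
    ∑ d ∈ Finset.Icc 1 n, ((d:ℝ))⁻¹ ≤ 1 + Real.log n := by
  have h1 := harmonic_le_one_add_log n
  have h2 : ((harmonic n : ℚ) : ℝ) = ∑ d ∈ Finset.Icc 1 n, ((d:ℝ))⁻¹ := by
    rw [harmonic_eq_sum_Icc]
    push_cast
    rfl
  linarith [h2 ▸ h1]

lemma log_le_rpow_div {x ε : ℝ} (hx : 1 ≤ x) (hε : 0 < ε) : Real.log x ≤ x ^ ε / ε := by
  have hx0 : 0 < x := lt_of_lt_of_le one_pos hx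
  have h1 : Real.log (x ^ ε) = ε * Real.log x := Real.log_rpow hx0 ε
  have h2 : Real.log (x ^ ε) ≤ x ^ ε - 1 := Real.log_le_sub_one_of_pos (by positivity)
  rw [le_div_iff₀ hε]
  nlinarith [Real.rpow_pos_of_pos hx0 ε]

lemma rpow_quarter_gap {a b : ℝ} (hb : 1 ≤ b) (hab : b ≤ a) :
    (a - b) ≤ (a ^ ((1:ℝ)/4) - b ^ ((1:ℝ)/4)) * (4 * a ^ ((3:ℝ)/4)) := by
  have ha0 : (0:ℝ) < a := by linarith
  have hb0 : (0:ℝ) < b := by linarith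
  set s := a ^ ((1:ℝ)/4) with hsdef
  set t := b ^ ((1:ℝ)/4) with htdef
  have hs4 : s ^ (4:ℕ) = a := by
    rw [hsdef, ← Real.rpow_natCast (a ^ ((1:ℝ)/4)) 4, ← Real.rpow_mul ha0.le]
    norm_num
  have ht4 : t ^ (4:ℕ) = b := by
    rw [htdef, ← Real.rpow_natCast (b ^ ((1:ℝ)/4)) 4, ← Real.rpow_mul hb0.le]
    norm_num
  have hs3 : s ^ (3:ℕ) = a ^ ((3:ℝ)/4) := by
    rw [hsdef, ← Real.rpow_natCast (a ^ ((1:ℝ)/4)) 3, ← Real.rpow_mul ha0.le]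
    norm_num
  have hts : t ≤ s := Real.rpow_le_rpow hb0.le hab (by norm_num)
  have ht1 : (1:ℝ) ≤ t := by
    have := Real.rpow_le_rpow zero_le_one hb (by norm_num : (0:ℝ) ≤ 1/4)
    rwa [Real.one_rpow] at this
  rw [← hs3, ← hs4, ← ht4]
  nlinarith [sub_nonneg.mpr hts, sub_nonneg.mpr ht1, sq_nonneg (s - t), sq_nonneg (s + t),
    mul_nonneg (sub_nonneg.mpr hts) (sub_nonneg.mpr ht1),
    mul_nonneg (mul_nonneg (sub_nonneg.mpr hts) (sub_nonneg.mpr hts)) (sub_nonneg.mpr ht1)]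

lemma aux_inj_sum (n : ℕ) (T : Finset ℕ) (σ : ℕ → ℕ)
    (hinj : ∀ x ∈ T, ∀ y ∈ T, σ x = σ y → x = y)
    (hmem : ∀ k ∈ T, σ k ∈ Finset.Icc 1 n) :
    ∑ k ∈ T, ((σ k : ℝ))⁻¹ ≤ 1 + Real.log n := by
  have himg : ∑ k ∈ T, ((σ k : ℝ))⁻¹ = ∑ d ∈ T.image σ, ((d:ℝ))⁻¹ :=
    (Finset.sum_image (f := fun d : ℕ => ((d:ℝ))⁻¹) (g := σ) hinj).symm
  rw [himg]
  refine le_trans (Finset.sum_le_sum_of_subset_of_nonneg ?_ ?_) (sum_inv_Icc_le n)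
  · intro d hd
    obtain ⟨k, hk, rfl⟩ := Finset.mem_image.mp hd
    exact hmem k hk
  · intro d _ _
    positivity

lemma sum_inv_dist_le (n k1 : ℕ) (hk1 : k1 ≤ n) (S : Finset ℕ)
    (hS : S ⊆ Finset.Icc 1 n) :
    ∑ k2 ∈ S.erase k1, |(k1:ℝ) - (k2:ℝ)|⁻¹ ≤ 2 * (1 + Real.log n) := by
  rw [← Finset.sum_filter_add_sum_filter_not (S.erase k1) (· < k1)]
  have hb1 : ∑ k2 ∈ (S.erase k1).filter (· < k1), |(k1:ℝ) - (k2:ℝ)|⁻¹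
      ≤ 1 + Real.log n := by
    have heq : ∀ k2 ∈ (S.erase k1).filter (· < k1),
        |(k1:ℝ) - (k2:ℝ)|⁻¹ = (((k1 - k2 : ℕ) : ℝ))⁻¹ := by
      intro k2 hk2
      have h := (Finset.mem_filter.mp hk2).2
      rw [Nat.cast_sub (le_of_lt h), abs_of_pos (by
        have : (k2:ℝ) < k1 := by exact_mod_cast h
        linarith)]
    rw [Finset.sum_congr rfl heq]
    apply aux_inj_sum
    · intro x hx y hy hxy
      have hx' := (Finset.mem_filter.mp hx).2
      have hy' := (Finset.mem_filter.mp hy).2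
      omega
    · intro k hk
      have h1 := (Finset.mem_filter.mp hk).2
      have h2 := Finset.mem_Icc.mp (hS (Finset.mem_of_mem_erase (Finset.mem_filter.mp hk).1))
      simp only [Finset.mem_Icc]
      omega
  have hb2 : ∑ k2 ∈ (S.erase k1).filter (fun k2 => ¬ k2 < k1), |(k1:ℝ) - (k2:ℝ)|⁻¹
      ≤ 1 + Real.log n := by
    have heq : ∀ k2 ∈ (S.erase k1).filter (fun k2 => ¬ k2 < k1),
        |(k1:ℝ) - (k2:ℝ)|⁻¹ = (((k2 - k1 : ℕ) : ℝ))⁻¹ := by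
      intro k2 hk2
      have h := (Finset.mem_filter.mp hk2).2
      have hne : k2 ≠ k1 := Finset.ne_of_mem_erase (Finset.mem_filter.mp hk2).1
      have hlt : k1 < k2 := by omega
      rw [Nat.cast_sub (le_of_lt hlt), abs_sub_comm, abs_of_pos (by
        have : (k1:ℝ) < k2 := by exact_mod_cast hlt
        linarith)]
    rw [Finset.sum_congr rfl heq]
    apply aux_inj_sum
    · intro x hx y hy hxy
      have hx' := (Finset.mem_filter.mp hx).2
      have hy' := (Finset.mem_filter.mp hy).2
      have hxe : x ≠ k1 := Finset.ne_of_mem_erase (Finset.mem_filter.mp hx).1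
      have hye : y ≠ k1 := Finset.ne_of_mem_erase (Finset.mem_filter.mp hy).1
      omega
    · intro k hk
      have h1 := (Finset.mem_filter.mp hk).2
      have hne : k ≠ k1 := Finset.ne_of_mem_erase (Finset.mem_filter.mp hk).1
      have h2 := Finset.mem_Icc.mp (hS (Finset.mem_of_mem_erase (Finset.mem_filter.mp hk).1))
      simp only [Finset.mem_Icc]
      omega
  linarith

lemma log_le_rpow_div' {x ε : ℝ} (hx : 1 ≤ x) (hε : 0 < ε) : Real.log x ≤ x ^ ε / ε := by
  have hx0 : 0 < x := lt_of_lt_of_le one_pos hx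
  have h1 : Real.log (x ^ ε) = ε * Real.log x := Real.log_rpow hx0 ε
  have h2 : Real.log (x ^ ε) ≤ x ^ ε - 1 := Real.log_le_sub_one_of_pos (by positivity)
  rw [le_div_iff₀ hε]
  nlinarith [Real.rpow_pos_of_pos hx0 ε]

set_option maxHeartbeats 1000000 in
lemma final_arith (C X K ε' ξ : ℝ) (hC0 : 0 ≤ C) (hX : 1 ≤ X) (hK : 1 ≤ K) (hKX : K ≤ X)
    (hε' : 0 < ε') (hξ0 : 0 ≤ ξ) (hξ1 : ξ ≤ 1) (N2 : ℕ) (hN2 : (N2:ℝ) ≤ 2*K) (hN21 : 1 ≤ N2) :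
    2*K * ((C * (2*K)^ε' * K^(-((5+2*ξ)/8)))^2 * X
      + (3 * (C * (2*K)^ε' * K^(-((5+2*ξ)/8)))^2 * X^((3:ℝ)/4) * (2*K)^((3:ℝ)/4))
          * (2*(1+Real.log N2)))
    ≤ (2*C^2*2^(2*ε') + 24*C^2*(1+1/ε')*2^(3*ε'))
        * (X^(1+3*ε') + X^((3:ℝ)/4+3*ε') * K^((1-ξ)/2)) := by
  have hX0 : (0:ℝ) < X := lt_of_lt_of_le one_pos hX
  have hK0 : (0:ℝ) < K := lt_of_lt_of_le one_pos hK
  set b : ℝ := -((5+2*ξ)/8) with hb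
  have hb0 : b ≤ 0 := by rw [hb]; linarith
  set D : ℝ := 2^ε' * X^ε' with hD
  have hD0 : (0:ℝ) < D := by positivity
  have hXε1 : (1:ℝ) ≤ X^ε' := by
    calc (1:ℝ) = X ^ (0:ℝ) := (Real.rpow_zero X).symm
      _ ≤ X^ε' := Real.rpow_le_rpow_of_exponent_le hX hε'.le
  have h2ε1 : (1:ℝ) ≤ (2:ℝ)^ε' := by
    calc (1:ℝ) = (2:ℝ) ^ (0:ℝ) := (Real.rpow_zero 2).symm
      _ ≤ 2^ε' := Real.rpow_le_rpow_of_exponent_le one_le_two hε'.le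
  have hD1 : (1:ℝ) ≤ D := by rw [hD]; nlinarith
  have h2K : (2*K)^ε' ≤ D := by
    rw [hD, Real.mul_rpow (by norm_num) hK0.le]
    exact mul_le_mul_of_nonneg_left (Real.rpow_le_rpow hK0.le hKX hε'.le) (by positivity)
  have hN2' : (1:ℝ) ≤ (N2:ℝ) := by exact_mod_cast hN21
  have hlog0 : (0:ℝ) ≤ Real.log N2 := Real.log_nonneg hN2'
  have hlog : 1 + Real.log N2 ≤ (1+1/ε') * D := by
    have h1 : Real.log N2 ≤ Real.log (2*K) := Real.log_le_log (by linarith) hN2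
    have h2 : Real.log (2*K) ≤ (2*K)^ε' / ε' := log_le_rpow_div' (by linarith) hε'
    have h3 : (2*K)^ε' / ε' ≤ D / ε' := by gcongr
    have h4 : Real.log N2 ≤ D / ε' := by linarith
    have h5 : D / ε' = D * (1/ε') := by ring
    nlinarith
  have hD2 : D^2 = 2^(2*ε') * X^(2*ε') := by
    rw [hD, mul_pow, ← Real.rpow_natCast ((2:ℝ)^ε') 2, ← Real.rpow_natCast (X^ε') 2,
      ← Real.rpow_mul (by norm_num : (0:ℝ) ≤ 2), ← Real.rpow_mul hX0.le]
    ring_nf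
  have hD3 : D^2*D = 2^(3*ε') * X^(3*ε') := by
    rw [hD2, hD, show (3:ℝ)*ε' = 2*ε'+ε' by ring, Real.rpow_add (by norm_num : (0:ℝ)<2),
      Real.rpow_add hX0]
    ring
  have hKb2 : K*(K^b)^2 ≤ 1 := by
    have h1 : K^(1+(b+b)) = K*(K^b)^2 := by
      rw [Real.rpow_add hK0, Real.rpow_add hK0, Real.rpow_one, sq]
    rw [← h1]
    exact Real.rpow_le_one_of_one_le_of_nonpos hK (by rw [hb]; linarith)
  have hXX : X^(2*ε')*X ≤ X^(1+3*ε') := by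
    have h1 : X^(2*ε')*X = X^(2*ε'+1) := by rw [Real.rpow_add hX0, Real.rpow_one]
    rw [h1]
    exact Real.rpow_le_rpow_of_exponent_le hX (by linarith)
  have hK74 : K * K^((3:ℝ)/4) * (K^b)^2 = K^((1-ξ)/2) := by
    rw [show (1-ξ)/2 = 1+((3:ℝ)/4+(b+b)) by rw [hb]; ring,
      Real.rpow_add hK0, Real.rpow_add hK0, Real.rpow_add hK0, Real.rpow_one, sq]
    ring
  have h2K34 : (2*K)^((3:ℝ)/4) ≤ 2*K^((3:ℝ)/4) := by
    rw [Real.mul_rpow (by norm_num) hK0.le]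
    have h22 : (2:ℝ)^((3:ℝ)/4) ≤ 2 := by
      calc (2:ℝ)^((3:ℝ)/4) ≤ (2:ℝ)^(1:ℝ) :=
            Real.rpow_le_rpow_of_exponent_le one_le_two (by norm_num)
        _ = 2 := Real.rpow_one 2
    exact mul_le_mul_of_nonneg_right h22 (by positivity)
  have hP1 : 2*K * ((C * (2*K)^ε' * K^b)^2 * X) ≤ 2*C^2*2^(2*ε') * X^(1+3*ε') := by
    calc 2*K * ((C * (2*K)^ε' * K^b)^2 * X)
        = 2*C^2*(((2*K)^ε')^2)*(K*(K^b)^2)*X := by ring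
      _ ≤ 2*C^2*(D^2)*(K*(K^b)^2)*X := by gcongr
      _ ≤ 2*C^2*(D^2)*1*X := by gcongr
      _ = 2*C^2*2^(2*ε')*(X^(2*ε')*X) := by rw [hD2]; ring
      _ ≤ 2*C^2*2^(2*ε')*X^(1+3*ε') := by gcongr
  have hP2 : 2*K * ((3 * (C * (2*K)^ε' * K^b)^2 * X^((3:ℝ)/4) * (2*K)^((3:ℝ)/4))
          * (2*(1+Real.log N2)))
      ≤ 24*C^2*(1+1/ε')*2^(3*ε') * (X^((3:ℝ)/4+3*ε') * K^((1-ξ)/2)) := by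
    calc 2*K * ((3 * (C * (2*K)^ε' * K^b)^2 * X^((3:ℝ)/4) * (2*K)^((3:ℝ)/4))
            * (2*(1+Real.log N2)))
        = 12*C^2 * (((2*K)^ε')^2) * ((K^b)^2 * K) * X^((3:ℝ)/4) * ((2*K)^((3:ℝ)/4))
            * (1+Real.log N2) := by ring
      _ ≤ 12*C^2 * (D^2) * ((K^b)^2 * K) * X^((3:ℝ)/4) * (2*K^((3:ℝ)/4))
            * ((1+1/ε')*D) := by gcongr <;> positivity
      _ = 24*C^2*(1+1/ε') * (D^2*D) * (K * K^((3:ℝ)/4) * (K^b)^2) * X^((3:ℝ)/4) := by ring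
      _ = 24*C^2*(1+1/ε') * (2^(3*ε')*X^(3*ε')) * K^((1-ξ)/2) * X^((3:ℝ)/4) := by
          rw [hD3, hK74]
      _ = 24*C^2*(1+1/ε')*2^(3*ε') * ((X^(3*ε')*X^((3:ℝ)/4)) * K^((1-ξ)/2)) := by ring
      _ = 24*C^2*(1+1/ε')*2^(3*ε') * (X^((3:ℝ)/4+3*ε') * K^((1-ξ)/2)) := by
          rw [← Real.rpow_add hX0]
          ring_nf
  have ht1 : (0:ℝ) ≤ X^(1+3*ε') := by positivity
  have ht2 : (0:ℝ) ≤ X^((3:ℝ)/4+3*ε') * K^((1-ξ)/2) := by positivity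
  have hA1 : (0:ℝ) ≤ 2*C^2*2^(2*ε') := by positivity
  have hA2 : (0:ℝ) ≤ 24*C^2*(1+1/ε')*2^(3*ε') := by positivity
  nlinarith [hP1, hP2]
noncomputable def fTerm (c : ℕ → ℝ) (ξ : ℝ) (k : ℕ) (x : ℝ) : ℂ :=
  (c k : ℂ) * (((k : ℝ) ^ (-((5 + 2 * ξ) / 8)) : ℝ) : ℂ) *
    Complex.exp (8 * Real.pi * Complex.I * (((x * k) ^ ((1 : ℝ) / 4) : ℝ) : ℂ))

lemma fTerm_cont (c : ℕ → ℝ) (ξ : ℝ) (k : ℕ) : Continuous (fTerm c ξ k) := by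
  unfold fTerm
  have h1 : Continuous (fun x : ℝ => ((x * k) ^ ((1:ℝ)/4) : ℝ)) := by
    rw [continuous_iff_continuousAt]
    intro x
    exact (Real.continuousAt_rpow_const _ _ (Or.inr (by norm_num))).comp
      (continuousAt_id.mul continuousAt_const)
  exact continuous_const.mul (Complex.continuous_exp.comp
    (continuous_const.mul (Complex.continuous_ofReal.comp h1)))

lemma fTerm_norm (c : ℕ → ℝ) (ξ : ℝ) (k : ℕ) (x : ℝ) :
    ‖fTerm c ξ k x‖ = |c k| * (k : ℝ) ^ (-((5 + 2 * ξ) / 8)) := by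
  unfold fTerm
  rw [norm_mul, norm_mul]
  have h1 : ‖Complex.exp (8 * Real.pi * Complex.I * (((x * k) ^ ((1:ℝ)/4) : ℝ) : ℂ))‖ = 1 := by
    rw [show (8 * (Real.pi:ℂ) * Complex.I * (((x * k) ^ ((1:ℝ)/4) : ℝ) : ℂ))
        = (((8 * Real.pi * ((x * k) ^ ((1:ℝ)/4)) : ℝ) : ℂ)) * Complex.I by push_cast; ring]
    exact Complex.norm_exp_ofReal_mul_I _
  rw [h1, mul_one, Complex.norm_real, Complex.norm_real, Real.norm_eq_abs, Real.norm_eq_abs,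
    abs_of_nonneg (Real.rpow_nonneg (Nat.cast_nonneg k) _)]

lemma fTerm_mul_conj (c : ℕ → ℝ) (ξ : ℝ) (k1 k2 : ℕ) (x : ℝ) (hx : 0 < x) :
    fTerm c ξ k1 x * (starRingEnd ℂ) (fTerm c ξ k2 x) =
      ((c k1 * c k2 * (k1:ℝ) ^ (-((5 + 2*ξ)/8)) * (k2:ℝ) ^ (-((5 + 2*ξ)/8)) : ℝ) : ℂ) *
        Complex.exp (Complex.I *
          (((8 * Real.pi * ((k1:ℝ) ^ ((1:ℝ)/4) - (k2:ℝ) ^ ((1:ℝ)/4))) * x ^ ((1:ℝ)/4) : ℝ) : ℂ)) := by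
  unfold fTerm
  have hm1 : ((x * (k1:ℝ)) ^ ((1:ℝ)/4)) = x ^ ((1:ℝ)/4) * (k1:ℝ) ^ ((1:ℝ)/4) :=
    Real.mul_rpow hx.le (Nat.cast_nonneg _)
  have hm2 : ((x * (k2:ℝ)) ^ ((1:ℝ)/4)) = x ^ ((1:ℝ)/4) * (k2:ℝ) ^ ((1:ℝ)/4) :=
    Real.mul_rpow hx.le (Nat.cast_nonneg _)
  rw [map_mul, map_mul, Complex.conj_ofReal, Complex.conj_ofReal, ← Complex.exp_conj]
  have harr : ∀ A B : ℂ, ∀ a b e1 e2 : ℂ,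
      (a * b * e1) * (A * B * e2) = (a * b * (A * B)) * (e1 * e2) := by intros; ring
  rw [harr]
  rw [← Complex.exp_add]
  congr 1
  · push_cast; ring
  · congr 1
    simp only [map_mul, Complex.conj_I, Complex.conj_ofReal, map_ofNat]
    rw [hm1, hm2]
    push_cast
    ring
lemma dist_le_gap (K : ℝ) {a b : ℝ} (ha1 : 1 ≤ a) (hb1 : 1 ≤ b)
    (haK : a ≤ 2*K) (hbK : b ≤ 2*K) :
    |a - b| ≤ |a ^ ((1:ℝ)/4) - b ^ ((1:ℝ)/4)| * (4 * (2*K) ^ ((3:ℝ)/4)) := by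
  rcases le_total b a with hab | hab
  · have h1 := rpow_quarter_gap hb1 hab
    have hmon : (0:ℝ) ≤ a ^ ((1:ℝ)/4) - b ^ ((1:ℝ)/4) :=
      sub_nonneg.mpr (Real.rpow_le_rpow (by linarith) hab (by norm_num))
    rw [abs_of_nonneg (by linarith), abs_of_nonneg hmon]
    have h34 : a ^ ((3:ℝ)/4) ≤ (2*K) ^ ((3:ℝ)/4) :=
      Real.rpow_le_rpow (by linarith) haK (by norm_num)
    calc a - b ≤ (a ^ ((1:ℝ)/4) - b ^ ((1:ℝ)/4)) * (4 * a ^ ((3:ℝ)/4)) := h1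
      _ ≤ (a ^ ((1:ℝ)/4) - b ^ ((1:ℝ)/4)) * (4 * (2*K) ^ ((3:ℝ)/4)) := by
          apply mul_le_mul_of_nonneg_left _ hmon
          linarith
  · have h1 := rpow_quarter_gap ha1 hab
    have hmon : (0:ℝ) ≤ b ^ ((1:ℝ)/4) - a ^ ((1:ℝ)/4) :=
      sub_nonneg.mpr (Real.rpow_le_rpow (by linarith) hab (by norm_num))
    rw [abs_sub_comm, abs_sub_comm (a ^ ((1:ℝ)/4)), abs_of_nonneg (by linarith),
      abs_of_nonneg hmon]
    have h34 : b ^ ((3:ℝ)/4) ≤ (2*K) ^ ((3:ℝ)/4) :=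
      Real.rpow_le_rpow (by linarith) hbK (by norm_num)
    calc b - a ≤ (b ^ ((1:ℝ)/4) - a ^ ((1:ℝ)/4)) * (4 * b ^ ((3:ℝ)/4)) := h1
      _ ≤ (b ^ ((1:ℝ)/4) - a ^ ((1:ℝ)/4)) * (4 * (2*K) ^ ((3:ℝ)/4)) := by
          apply mul_le_mul_of_nonneg_left _ hmon
          linarith


set_option maxHeartbeats 2000000 in
/-- The exponential sum mean square estimate from the proof of Theorem 2:
for `c k ≪_ε k^ε`, `0 ≤ ξ ≤ 1`, `1 ≤ K ≤ X`,
`∫_X^{2X} |∑_{K < k ≤ 2K} c_k k^{-(5+2ξ)/8} e(4(xk)^{1/4})|² dx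
  ≪_ε X^{1+ε} + X^{3/4+ε} K^{(1-ξ)/2}`. -/
theorem exponential_sum_mean_square
    (ξ : ℝ) (hξ0 : 0 ≤ ξ) (hξ1 : ξ ≤ 1)
    (c : ℕ → ℝ)
    (hcε : ∀ ε : ℝ, 0 < ε → ∃ K : ℝ, ∀ k : ℕ, 1 ≤ k → |c k| ≤ K * (k : ℝ) ^ ε) :
    ∀ ε : ℝ, 0 < ε → ∃ L : ℝ, ∀ X K : ℝ, 1 ≤ X → 1 ≤ K → K ≤ X →
      (∫ x in X..(2 * X),
          ‖∑ k ∈ Finset.Ioc ⌊K⌋₊ ⌊2 * K⌋₊,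
              (c k : ℂ) * ((k : ℝ) ^ (-((5 + 2 * ξ) / 8)) : ℝ) *
                Complex.exp (8 * Real.pi * Complex.I *
                  (((x * k) ^ ((1 : ℝ) / 4) : ℝ) : ℂ))‖ ^ 2) ≤
        L * (X ^ (1 + ε) + X ^ ((3 : ℝ) / 4 + ε) * K ^ ((1 - ξ) / 2)) := by
  intro ε hε
  have hε' : 0 < ε/3 := by positivity
  obtain ⟨C, hC⟩ := hcε (ε/3) hε'
  have hC0 : 0 ≤ C := by
    have h := hC 1 le_rfl
    rw [Nat.cast_one, Real.one_rpow, mul_one] at h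
    exact le_trans (abs_nonneg _) h
  refine ⟨2*C^2*2^(2*(ε/3)) + 24*C^2*(1+1/(ε/3))*2^(3*(ε/3)), ?_⟩
  intro X K hX hK hKX
  have hX0 : (0:ℝ) < X := lt_of_lt_of_le one_pos hX
  have hK0 : (0:ℝ) < K := lt_of_lt_of_le one_pos hK
  set N1 := ⌊K⌋₊ with hN1def
  set N2 := ⌊2*K⌋₊ with hN2def
  set Sf := Finset.Ioc N1 N2 with hSfdef
  show (∫ x in X..(2*X), ‖∑ k ∈ Sf, fTerm c ξ k x‖ ^ 2) ≤ _
  have hcont : ∀ k : ℕ, Continuous (fTerm c ξ k) := fTerm_cont c ξ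
  have hScont : Continuous (fun x => ∑ k ∈ Sf, fTerm c ξ k x) :=
    continuous_finset_sum _ fun k _ => hcont k
  have hprodcont : ∀ k1 k2 : ℕ,
      Continuous (fun x => fTerm c ξ k1 x * (starRingEnd ℂ) (fTerm c ξ k2 x)) :=
    fun k1 k2 => (hcont k1).mul (Complex.continuous_conj.comp (hcont k2))
  -- membership facts
  have hkmem : ∀ k ∈ Sf, (1:ℝ) ≤ (k:ℝ) ∧ K ≤ (k:ℝ) ∧ (k:ℝ) ≤ 2*K ∧ 1 ≤ k := by
    intro k hk
    obtain ⟨ha, hb2⟩ := Finset.mem_Ioc.mp hk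
    have h1 : K < ((N1:ℕ):ℝ) + 1 := Nat.lt_floor_add_one K
    have h2 : ((N1:ℕ):ℝ) + 1 ≤ (k:ℝ) := by
      have : N1 + 1 ≤ k := ha
      exact_mod_cast this
    have h3 : (k:ℝ) ≤ (N2:ℝ) := by exact_mod_cast hb2
    have h4 : (N2:ℝ) ≤ 2*K := Nat.floor_le (by positivity)
    have h5 : (1:ℝ) ≤ (k:ℝ) := by linarith
    exact ⟨h5, by linarith, by linarith, by exact_mod_cast h5⟩
  have hN2le : (N2:ℝ) ≤ 2*K := Nat.floor_le (by positivity)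
  -- uniform bound on terms
  set P := C * (2*K)^(ε/3) * K^(-((5+2*ξ)/8)) with hPdef
  have hP0 : 0 ≤ P := by
    apply mul_nonneg (mul_nonneg hC0 (by positivity)) (by positivity)
  have hfb : ∀ k ∈ Sf, ∀ x : ℝ, ‖fTerm c ξ k x‖ ≤ P := by
    intro k hk x
    obtain ⟨hk1, hkK, hk2K, hk1n⟩ := hkmem k hk
    rw [fTerm_norm]
    have hc1 : |c k| ≤ C * (2*K)^(ε/3) := by
      refine le_trans (hC k hk1n) ?_
      exact mul_le_mul_of_nonneg_left
        (Real.rpow_le_rpow (by positivity) hk2K hε'.le) hC0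
    have hr : (k:ℝ)^(-((5+2*ξ)/8)) ≤ K^(-((5+2*ξ)/8)) :=
      Real.rpow_le_rpow_of_nonpos hK0 hkK (by linarith)
    have hr0 : 0 ≤ (k:ℝ)^(-((5+2*ξ)/8)) := Real.rpow_nonneg (Nat.cast_nonneg k) _
    exact mul_le_mul hc1 hr hr0 (mul_nonneg hC0 (by positivity))
  -- diagonal bound
  have hdiag : ∀ k ∈ Sf,
      ‖∫ x in X..(2*X), fTerm c ξ k x * (starRingEnd ℂ) (fTerm c ξ k x)‖ ≤ P^2 * X := by
    intro k hk
    have hb : ∀ x ∈ Set.uIoc X (2*X),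
        ‖fTerm c ξ k x * (starRingEnd ℂ) (fTerm c ξ k x)‖ ≤ P^2 := by
      intro x _
      rw [norm_mul, RCLike.norm_conj, ← sq]
      have := hfb k hk x
      exact pow_le_pow_left₀ (norm_nonneg _) this 2
    have h := intervalIntegral.norm_integral_le_of_norm_le_const hb
    rw [show (2*X - X) = X by ring, abs_of_nonneg hX0.le] at h
    exact h
  -- off-diagonal bound
  have hoff : ∀ k1 ∈ Sf, ∀ k2 ∈ Sf, k2 ≠ k1 →
      ‖∫ x in X..(2*X), fTerm c ξ k1 x * (starRingEnd ℂ) (fTerm c ξ k2 x)‖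
        ≤ (3 * P^2 * X^((3:ℝ)/4) * (2*K)^((3:ℝ)/4)) * |(k1:ℝ) - (k2:ℝ)|⁻¹ := by
    intro k1 hk1 k2 hk2 hne
    obtain ⟨h11, h1K, h12K, h11n⟩ := hkmem k1 hk1
    obtain ⟨h21, h2K2, h22K, h21n⟩ := hkmem k2 hk2
    set μ : ℝ := 8*Real.pi*((k1:ℝ)^((1:ℝ)/4) - (k2:ℝ)^((1:ℝ)/4)) with hμdef
    have hΔne : (k1:ℝ)^((1:ℝ)/4) - (k2:ℝ)^((1:ℝ)/4) ≠ 0 := by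
      rw [sub_ne_zero]
      intro h
      apply hne
      have h4a : ((k1:ℝ)^((1:ℝ)/4))^(4:ℕ) = (k1:ℝ) := by
        rw [← Real.rpow_natCast ((k1:ℝ)^((1:ℝ)/4)) 4, ← Real.rpow_mul (Nat.cast_nonneg k1)]
        norm_num
      have h4b : ((k2:ℝ)^((1:ℝ)/4))^(4:ℕ) = (k2:ℝ) := by
        rw [← Real.rpow_natCast ((k2:ℝ)^((1:ℝ)/4)) 4, ← Real.rpow_mul (Nat.cast_nonneg k2)]
        norm_num
      have : (k2:ℝ) = (k1:ℝ) := by rw [← h4a, ← h4b, h]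
      exact_mod_cast this
    have hμne : μ ≠ 0 := mul_ne_zero (by positivity) hΔne
    have heq : Set.EqOn (fun x => fTerm c ξ k1 x * (starRingEnd ℂ) (fTerm c ξ k2 x))
        (fun x => ((c k1 * c k2 * (k1:ℝ)^(-((5+2*ξ)/8)) * (k2:ℝ)^(-((5+2*ξ)/8)) : ℝ) : ℂ) *
          Complex.exp (Complex.I * ((μ * x^((1:ℝ)/4) : ℝ) : ℂ))) (Set.uIcc X (2*X)) := by
      intro x hx
      rw [Set.uIcc_of_le (by linarith)] at hx
      exact fTerm_mul_conj c ξ k1 k2 x (lt_of_lt_of_le hX0 hx.1)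
    rw [intervalIntegral.integral_congr heq]
    rw [intervalIntegral.integral_const_mul, norm_mul]
    have hosc := osc_integral μ hμne X hX
    have hcoefb : ‖((c k1 * c k2 * (k1:ℝ)^(-((5+2*ξ)/8)) * (k2:ℝ)^(-((5+2*ξ)/8)) : ℝ) : ℂ)‖
        ≤ P^2 := by
      rw [Complex.norm_real, Real.norm_eq_abs]
      have hr10 : 0 ≤ (k1:ℝ)^(-((5+2*ξ)/8)) := Real.rpow_nonneg (Nat.cast_nonneg k1) _
      have hr20 : 0 ≤ (k2:ℝ)^(-((5+2*ξ)/8)) := Real.rpow_nonneg (Nat.cast_nonneg k2) _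
      have e1 : |c k1 * c k2 * (k1:ℝ)^(-((5+2*ξ)/8)) * (k2:ℝ)^(-((5+2*ξ)/8))|
          = (|c k1| * (k1:ℝ)^(-((5+2*ξ)/8))) * (|c k2| * (k2:ℝ)^(-((5+2*ξ)/8))) := by
        rw [abs_mul, abs_mul, abs_mul, abs_of_nonneg hr10, abs_of_nonneg hr20]
        ring
      rw [e1]
      have hb1 : |c k1| * (k1:ℝ)^(-((5+2*ξ)/8)) ≤ P := by
        rw [← fTerm_norm c ξ k1 X]; exact hfb k1 hk1 X
      have hb2 : |c k2| * (k2:ℝ)^(-((5+2*ξ)/8)) ≤ P := by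
        rw [← fTerm_norm c ξ k2 X]; exact hfb k2 hk2 X
      calc (|c k1| * (k1:ℝ)^(-((5+2*ξ)/8))) * (|c k2| * (k2:ℝ)^(-((5+2*ξ)/8)))
          ≤ P * P := mul_le_mul hb1 hb2 (mul_nonneg (abs_nonneg _) hr20) hP0
        _ = P^2 := (sq P).symm
    have hd0 : (0:ℝ) < |(k1:ℝ) - (k2:ℝ)| := by
      rw [abs_pos, sub_ne_zero]
      intro h
      exact hne (by exact_mod_cast h.symm)
    have hgap : |(k1:ℝ) - (k2:ℝ)|
        ≤ |(k1:ℝ)^((1:ℝ)/4) - (k2:ℝ)^((1:ℝ)/4)| * (4 * (2*K)^((3:ℝ)/4)) :=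
      dist_le_gap K h11 h21 h12K h22K
    have hμpos : 0 < |μ| := abs_pos.mpr hμne
    have hμabs : |μ| = 8*Real.pi*|(k1:ℝ)^((1:ℝ)/4) - (k2:ℝ)^((1:ℝ)/4)| := by
      rw [hμdef, abs_mul, abs_of_pos (by positivity)]
    have hT0 : (0:ℝ) ≤ (2*K)^((3:ℝ)/4) := by positivity
    have hX34 : (0:ℝ) ≤ X^((3:ℝ)/4) := by positivity
    have key : 15 * X^((3:ℝ)/4) * |(k1:ℝ)-(k2:ℝ)|
        ≤ 3 * X^((3:ℝ)/4) * (2*K)^((3:ℝ)/4) * |μ| := by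
      rw [hμabs]
      have e1 := mul_le_mul_of_nonneg_left hgap
        (show (0:ℝ) ≤ 15*X^((3:ℝ)/4) by positivity)
      nlinarith [e1, Real.pi_gt_three,
        mul_nonneg (mul_nonneg hX34 hT0) (abs_nonneg ((k1:ℝ)^((1:ℝ)/4) - (k2:ℝ)^((1:ℝ)/4)))]
    have hfrac : 15 * X^((3:ℝ)/4) / |μ|
        ≤ (3 * X^((3:ℝ)/4) * (2*K)^((3:ℝ)/4)) / |(k1:ℝ)-(k2:ℝ)| := by
      rw [div_le_div_iff₀ hμpos hd0]
      linarith [key]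
    calc ‖((c k1 * c k2 * (k1:ℝ)^(-((5+2*ξ)/8)) * (k2:ℝ)^(-((5+2*ξ)/8)) : ℝ) : ℂ)‖ *
          ‖∫ x in X..(2*X), Complex.exp (Complex.I * ((μ * x^((1:ℝ)/4) : ℝ) : ℂ))‖
        ≤ P^2 * (15 * X^((3:ℝ)/4) / |μ|) :=
          mul_le_mul hcoefb hosc (norm_nonneg _) (pow_nonneg hP0 2)
      _ ≤ P^2 * ((3 * X^((3:ℝ)/4) * (2*K)^((3:ℝ)/4)) / |(k1:ℝ)-(k2:ℝ)|) :=
          mul_le_mul_of_nonneg_left hfrac (pow_nonneg hP0 2)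
      _ = (3 * P^2 * X^((3:ℝ)/4) * (2*K)^((3:ℝ)/4)) * |(k1:ℝ) - (k2:ℝ)|⁻¹ := by
          rw [div_eq_mul_inv]; ring
  -- step 1 : pass to complex integral
  have hint : IntervalIntegrable (fun x => (∑ k ∈ Sf, fTerm c ξ k x) *
      (starRingEnd ℂ) (∑ k ∈ Sf, fTerm c ξ k x)) MeasureTheory.volume X (2*X) :=
    (hScont.mul (Complex.continuous_conj.comp hScont)).intervalIntegrable _ _
  have h1 : (∫ x in X..(2*X), ‖∑ k ∈ Sf, fTerm c ξ k x‖ ^ 2)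
      = (∫ x in X..(2*X),
          (∑ k ∈ Sf, fTerm c ξ k x) * (starRingEnd ℂ) (∑ k ∈ Sf, fTerm c ξ k x)).re := by
    calc (∫ x in X..(2*X), ‖∑ k ∈ Sf, fTerm c ξ k x‖ ^ 2)
        = ∫ x in X..(2*X), Complex.reCLM ((∑ k ∈ Sf, fTerm c ξ k x) *
            (starRingEnd ℂ) (∑ k ∈ Sf, fTerm c ξ k x)) := by
          apply intervalIntegral.integral_congr
          intro x _
          simp only [Complex.reCLM_apply, Complex.mul_conj, Complex.ofReal_re,
            Complex.normSq_eq_norm_sq]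
      _ = Complex.reCLM (∫ x in X..(2*X), (∑ k ∈ Sf, fTerm c ξ k x) *
            (starRingEnd ℂ) (∑ k ∈ Sf, fTerm c ξ k x)) :=
          ContinuousLinearMap.intervalIntegral_comp_comm Complex.reCLM hint
      _ = (∫ x in X..(2*X), (∑ k ∈ Sf, fTerm c ξ k x) *
            (starRingEnd ℂ) (∑ k ∈ Sf, fTerm c ξ k x)).re := rfl
  -- step 2 : expand the square
  have h2 : (∫ x in X..(2*X),
        (∑ k ∈ Sf, fTerm c ξ k x) * (starRingEnd ℂ) (∑ k ∈ Sf, fTerm c ξ k x))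
      = ∑ k1 ∈ Sf, ∑ k2 ∈ Sf,
          ∫ x in X..(2*X), fTerm c ξ k1 x * (starRingEnd ℂ) (fTerm c ξ k2 x) := by
    rw [intervalIntegral.integral_congr
      (g := fun x => ∑ k1 ∈ Sf, ∑ k2 ∈ Sf,
        fTerm c ξ k1 x * (starRingEnd ℂ) (fTerm c ξ k2 x))
      (fun x _ => by rw [map_sum, Finset.sum_mul_sum])]
    rw [intervalIntegral.integral_finset_sum (fun k1 _ =>
      (continuous_finset_sum _ fun k2 _ => hprodcont k1 k2).intervalIntegrable _ _)]
    exact Finset.sum_congr rfl fun k1 _ => intervalIntegral.integral_finset_sum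
      (fun k2 _ => (hprodcont k1 k2).intervalIntegrable _ _)
  -- row sums
  have hlogN2 : (0:ℝ) ≤ Real.log N2 := Real.log_nonneg (by
    have : (1:ℕ) ≤ N2 := Nat.le_floor (by push_cast; linarith)
    exact_mod_cast this)
  have hrow : ∀ k1 ∈ Sf,
      ∑ k2 ∈ Sf, ‖∫ x in X..(2*X), fTerm c ξ k1 x * (starRingEnd ℂ) (fTerm c ξ k2 x)‖
        ≤ P^2*X + (3 * P^2 * X^((3:ℝ)/4) * (2*K)^((3:ℝ)/4)) * (2*(1+Real.log N2)) := by
    intro k1 hk1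
    rw [← Finset.add_sum_erase Sf _ hk1]
    apply add_le_add (hdiag k1 hk1)
    have hQ0 : 0 ≤ 3 * P^2 * X^((3:ℝ)/4) * (2*K)^((3:ℝ)/4) := by
      have := pow_nonneg hP0 2
      positivity
    calc ∑ k2 ∈ Sf.erase k1,
          ‖∫ x in X..(2*X), fTerm c ξ k1 x * (starRingEnd ℂ) (fTerm c ξ k2 x)‖
        ≤ ∑ k2 ∈ Sf.erase k1,
            (3 * P^2 * X^((3:ℝ)/4) * (2*K)^((3:ℝ)/4)) * |(k1:ℝ)-(k2:ℝ)|⁻¹ :=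
          Finset.sum_le_sum fun k2 hk2 =>
            hoff k1 hk1 k2 (Finset.mem_of_mem_erase hk2) (Finset.ne_of_mem_erase hk2)
      _ = (3 * P^2 * X^((3:ℝ)/4) * (2*K)^((3:ℝ)/4)) *
            ∑ k2 ∈ Sf.erase k1, |(k1:ℝ)-(k2:ℝ)|⁻¹ := by rw [Finset.mul_sum]
      _ ≤ (3 * P^2 * X^((3:ℝ)/4) * (2*K)^((3:ℝ)/4)) * (2*(1+Real.log N2)) := by
          apply mul_le_mul_of_nonneg_left _ hQ0
          apply sum_inv_dist_le N2 k1 (Finset.mem_Ioc.mp hk1).2 Sf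
          intro k hk
          obtain ⟨ha, hb2⟩ := Finset.mem_Ioc.mp hk
          exact Finset.mem_Icc.mpr ⟨by omega, hb2⟩
  -- total
  have hcard : (Sf.card : ℝ) ≤ 2*K := by
    have h1 : Sf.card = N2 - N1 := Nat.card_Ioc N1 N2
    have h2 : Sf.card ≤ N2 := by omega
    calc (Sf.card : ℝ) ≤ (N2:ℝ) := by exact_mod_cast h2
      _ ≤ 2*K := hN2le
  have hrhs0 : 0 ≤ P^2*X + (3 * P^2 * X^((3:ℝ)/4) * (2*K)^((3:ℝ)/4)) * (2*(1+Real.log N2)) := by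
    have := pow_nonneg hP0 2
    positivity
  have hsum : ∑ k1 ∈ Sf, ∑ k2 ∈ Sf,
      ‖∫ x in X..(2*X), fTerm c ξ k1 x * (starRingEnd ℂ) (fTerm c ξ k2 x)‖
      ≤ 2*K * (P^2*X + (3 * P^2 * X^((3:ℝ)/4) * (2*K)^((3:ℝ)/4)) * (2*(1+Real.log N2))) := by
    calc ∑ k1 ∈ Sf, ∑ k2 ∈ Sf,
          ‖∫ x in X..(2*X), fTerm c ξ k1 x * (starRingEnd ℂ) (fTerm c ξ k2 x)‖
        ≤ ∑ _k1 ∈ Sf, (P^2*X + (3 * P^2 * X^((3:ℝ)/4) * (2*K)^((3:ℝ)/4)) *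
            (2*(1+Real.log N2))) := Finset.sum_le_sum hrow
      _ = (Sf.card : ℝ) * (P^2*X + (3 * P^2 * X^((3:ℝ)/4) * (2*K)^((3:ℝ)/4)) *
            (2*(1+Real.log N2))) := by rw [Finset.sum_const, nsmul_eq_mul]
      _ ≤ 2*K * (P^2*X + (3 * P^2 * X^((3:ℝ)/4) * (2*K)^((3:ℝ)/4)) *
            (2*(1+Real.log N2))) := mul_le_mul_of_nonneg_right hcard hrhs0
  have hN21 : 1 ≤ N2 := Nat.le_floor (by push_cast; linarith)
  have hfinal := final_arith C X K (ε/3) ξ hC0 hX hK hKX hε' hξ0 hξ1 N2 hN2le hN21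
  calc (∫ x in X..(2*X), ‖∑ k ∈ Sf, fTerm c ξ k x‖ ^ 2)
      = (∑ k1 ∈ Sf, ∑ k2 ∈ Sf,
          ∫ x in X..(2*X), fTerm c ξ k1 x * (starRingEnd ℂ) (fTerm c ξ k2 x)).re := by
        rw [h1, h2]
    _ ≤ ‖∑ k1 ∈ Sf, ∑ k2 ∈ Sf,
          ∫ x in X..(2*X), fTerm c ξ k1 x * (starRingEnd ℂ) (fTerm c ξ k2 x)‖ := by
        exact Complex.re_le_norm _
    _ ≤ ∑ k1 ∈ Sf, ∑ k2 ∈ Sf,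
          ‖∫ x in X..(2*X), fTerm c ξ k1 x * (starRingEnd ℂ) (fTerm c ξ k2 x)‖ :=
        le_trans (norm_sum_le _ _) (Finset.sum_le_sum fun k1 _ => norm_sum_le _ _)
    _ ≤ 2*K * (P^2*X + (3 * P^2 * X^((3:ℝ)/4) * (2*K)^((3:ℝ)/4)) * (2*(1+Real.log N2))) := hsum
    _ ≤ (2*C^2*2^(2*(ε/3)) + 24*C^2*(1+1/(ε/3))*2^(3*(ε/3)))
          * (X^(1+3*(ε/3)) + X^((3:ℝ)/4+3*(ε/3)) * K^((1-ξ)/2)) := hfinal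
    _ = (2*C^2*2^(2*(ε/3)) + 24*C^2*(1+1/(ε/3))*2^(3*(ε/3)))
          * (X^(1+ε) + X^((3:ℝ)/4+ε) * K^((1-ξ)/2)) := by
        rw [show 3*(ε/3) = ε by ring]
end
end
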